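/- arXiv:math/0203179 — 6 statements merged into one kernel-verified Lean document; each statement's English description precedes it below -/
import Mathlib

section
/- Let H be a free abelian group of rank 2g with symplectic basis (x_1,...,x_g,y_1,...,y_g) and intersection form •. For any h in H, if the Lie bracket [h, ω] = 0 in L_3(H), where L(H) is the free Lie ring on H and ω = Σ_i [x_i, y_i] ∈ L_2(H), then h = 0. -/
open FreeLieAlgebra

/-- The free Lie ring over `ℤ` on generators `x_1,…,x_g, y_1,…,y_g`,
encoded by the index type `Fin g ⊕ Fin g` (`Sum.inl i = x_i`, `Sum.inr i = y_i`). -/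
abbrev FreeLie (g : ℕ) := FreeLieAlgebra ℤ (Fin g ⊕ Fin g)

/-- The element of the free Lie ring corresponding to `h = ∑ c_j e_j ∈ H = ℤ^{2g}`. -/
noncomputable def lieOfH (g : ℕ) (c : Fin g ⊕ Fin g → ℤ) : FreeLie g :=
  ∑ j : Fin g ⊕ Fin g, c j • FreeLieAlgebra.of ℤ j

/-- The symplectic element `ω = ∑_i [x_i, y_i] ∈ L_2(H)`. -/
noncomputable def omegaLie (g : ℕ) : FreeLie g :=
  ∑ i : Fin g, ⁅FreeLieAlgebra.of ℤ (Sum.inl i : Fin g ⊕ Fin g),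
      FreeLieAlgebra.of ℤ (Sum.inr i : Fin g ⊕ Fin g)⁆

/-! Write `h = ∑ c_j e_j` and fix `k`. The Lie ring map sending `x_k ↦ A`, `y_k ↦ B` and every other
generator to `0` takes `⁅h, ω⁆` to `⁅a • A + b • B, ⁅A, B⁆⁆`, where `a = c (x_k)` and `b = c (y_k)`.
In `4 × 4` integer matrices the shift matrix `A` and `B = E₀₁` satisfy `⁅B, ⁅A, B⁆⁆ = 0` and
`⁅A, ⁅A, B⁆⁆ = E₀₃`, so the image is `a • E₀₃`, forcing `a = 0`; exchanging `A` and `B` gives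
`b = 0`. -/

section

variable {L : Type*} [LieRing L]

lemma lie_smul_add_smul_lie_of_lie_lie_eq_zero {A B : L} (hB : ⁅B, ⁅A, B⁆⁆ = 0) (a b : ℤ) :
    ⁅a • A + b • B, ⁅A, B⁆⁆ = a • ⁅A, ⁅A, B⁆⁆ := by
  simp [add_lie, hB]

lemma eq_zero_of_lie_smul_add_smul_lie_eq_zero [IsAddTorsionFree L] {A B : L}
    (hB : ⁅B, ⁅A, B⁆⁆ = 0) (hA : ⁅A, ⁅A, B⁆⁆ ≠ 0) {a b : ℤ}
    (h : ⁅a • A + b • B, ⁅A, B⁆⁆ = 0) : a = 0 := by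
  rwa [lie_smul_add_smul_lie_of_lie_lie_eq_zero hB, IsAddTorsionFree.zsmul_eq_zero_iff_left hA] at h

variable {g : ℕ}

lemma lift_single_lieOfH (k : Fin g) (A B : L) (c : Fin g ⊕ Fin g → ℤ) :
    lift ℤ (Sum.elim (Pi.single k A) (Pi.single k B)) (lieOfH g c) =
      c (Sum.inl k) • A + c (Sum.inr k) • B := by
  simp [lieOfH, Fintype.sum_sum_type, Pi.single_apply]

lemma lift_single_omegaLie (k : Fin g) (A B : L) :
    lift ℤ (Sum.elim (Pi.single k A) (Pi.single k B)) (omegaLie g) = ⁅A, B⁆ := by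
  simp only [omegaLie, map_sum, LieHom.map_lie, lift_of_apply, Sum.elim_inl, Sum.elim_inr]
  rw [Fintype.sum_eq_single k fun i hi => by simp [hi]]
  simp

lemma lie_smul_add_smul_lie_eq_zero {c : Fin g ⊕ Fin g → ℤ} (h : ⁅lieOfH g c, omegaLie g⁆ = 0)
    (k : Fin g) (A B : L) : ⁅c (Sum.inl k) • A + c (Sum.inr k) • B, ⁅A, B⁆⁆ = 0 := by
  simpa [lift_single_lieOfH, lift_single_omegaLie] using
    congr_arg (lift ℤ (Sum.elim (Pi.single k A) (Pi.single k B))) h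

end

instance {m n α : Type*} [AddMonoid α] [IsAddTorsionFree α] : IsAddTorsionFree (Matrix m n α) :=
  inferInstanceAs (IsAddTorsionFree (m → n → α))

attribute [local instance] LieRing.ofAssociativeRing

lemma exists_matrix_lie_lie_eq_zero_and_lie_lie_ne_zero :
    ∃ A B : Matrix (Fin 4) (Fin 4) ℤ, ⁅B, ⁅A, B⁆⁆ = 0 ∧ ⁅A, ⁅A, B⁆⁆ ≠ 0 := by
  refine ⟨!![0, 1, 0, 0; 0, 0, 1, 0; 0, 0, 0, 1; 0, 0, 0, 0], Matrix.single 0 1 1, ?_, ?_⟩ <;> decide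

/-- For `h` in the span `H` of the generators of the free Lie ring,
if `[h, ω] = 0` in `L_3(H)` then `h = 0`. -/
theorem bracket_omega_eq_zero_imp_zero (g : ℕ) (c : Fin g ⊕ Fin g → ℤ)
    (h : ⁅lieOfH g c, omegaLie g⁆ = 0) : ∀ j, c j = 0 := by
  obtain ⟨A, B, hB, hA⟩ := exists_matrix_lie_lie_eq_zero_and_lie_lie_ne_zero
  rintro (k | k)
  · exact eq_zero_of_lie_smul_add_smul_lie_eq_zero hB hA (lie_smul_add_smul_lie_eq_zero h k A B)
  · have hswap := lie_smul_add_smul_lie_eq_zero h k B A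
    rw [add_comm, ← lie_skew B A, lie_neg, neg_eq_zero] at hswap
    exact eq_zero_of_lie_smul_add_smul_lie_eq_zero hB hA hswap
end

section
/- Let e_1,...,e_{2g} be a basis of H_{(2)} = (Z/2)^{2g} with symplectic form •, and let B_g be the Z/2-subalgebra of functions Ω_g → Z/2 generated by \overline{1} and the functions \overline{e_i}. Then B_g is isomorphic as a Z/2-algebra to Z/2[t_1,...,t_{2g}]/(t_i^2 - t_i), via \overline{1} ↦ 1 and \overline{e_i} ↦ t_i. -/
/-- `H_(2) = H ⊗ ℤ/2 = (ℤ/2)^{2g}`, with basis indexed by `Fin g ⊕ Fin g`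
(`Sum.inl i = x_i`, `Sum.inr i = y_i`). -/
abbrev H2 (g : ℕ) := Fin g ⊕ Fin g → ZMod 2

/-- The mod-2 symplectic intersection form on `H_(2)`. -/
def bsym (g : ℕ) (a b : H2 g) : ZMod 2 :=
  ∑ i : Fin g, (a (Sum.inl i) * b (Sum.inr i) + a (Sum.inr i) * b (Sum.inl i))

/-- A quadratic form refining the mod-2 symplectic form. -/
def IsQuad (g : ℕ) (q : H2 g → ZMod 2) : Prop :=
  ∀ a b, q (a + b) = q a + q b + bsym g a b

/-- `Ω_g`, the set of quadratic refinements of the mod-2 symplectic form. -/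
abbrev Om (g : ℕ) := {q : H2 g → ZMod 2 // IsQuad g q}

/-- The evaluation function `\overline{h} : Ω_g → ℤ/2`, `q ↦ q(h)`. -/
def ovh (g : ℕ) (h : H2 g) : Om g → ZMod 2 := fun q => q.1 h

/-- The algebra `B_g` of Boolean polynomials: the `ℤ/2`-subalgebra of functions `Ω_g → ℤ/2`
generated by `\overline{1}` (the constant `1`, i.e. the algebra unit) and the `\overline{h}`. -/
noncomputable def Bg (g : ℕ) : Subalgebra (ZMod 2) (Om g → ZMod 2) :=
  Algebra.adjoin (ZMod 2) (Set.range (ovh g))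

open MvPolynomial in
/-- The ideal `(t_j² - t_j)` in `ℤ/2[t_1,…,t_{2g}]`. -/
noncomputable def boolIdeal (g : ℕ) : Ideal (MvPolynomial (Fin g ⊕ Fin g) (ZMod 2)) :=
  Ideal.span {p | ∃ j, p = X j ^ 2 - X j}

/- ### auxiliary machinery -/


def Qv (g : ℕ) (v : Fin g ⊕ Fin g → ZMod 2) (h : H2 g) : ZMod 2 :=
  (∑ j, h j * v j) + ∑ i : Fin g, h (Sum.inl i) * h (Sum.inr i)

lemma isQuad_Qv (g : ℕ) (v : Fin g ⊕ Fin g → ZMod 2) : IsQuad g (Qv g v) := by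
  intro a b
  simp only [Qv, bsym, Pi.add_apply, add_mul, mul_add, Finset.sum_add_distrib]
  ring_nf
  simp only [show ∀ x, b (Sum.inl x) * a (Sum.inr x) = a (Sum.inr x) * b (Sum.inl x) from
    fun x => mul_comm _ _]
  abel

lemma Qv_single (g : ℕ) (v : Fin g ⊕ Fin g → ZMod 2) (j : Fin g ⊕ Fin g) :
    Qv g v (Pi.single j 1) = v j := by
  have h1 : (∑ k, (Pi.single j 1 : H2 g) k * v k) = v j := by
    rw [Finset.sum_eq_single j]
    · simp
    · intro k _ hk; simp [Pi.single_apply, Ne.symm hk]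
    · simp
  have h2 : (∑ i : Fin g, (Pi.single j 1 : H2 g) (Sum.inl i) *
      (Pi.single j 1 : H2 g) (Sum.inr i)) = 0 := by
    apply Finset.sum_eq_zero
    intro i _
    rcases j with a | a <;> simp [Pi.single_apply]
  rw [Qv, h1, h2, add_zero]

lemma zmod2_cases : ∀ x : ZMod 2, x = 0 ∨ x = 1 := by decide

/-- a quadratic refinement is determined by its values on the basis -/
lemma quad_eq_Qv (g : ℕ) (q : Om g) (h : H2 g) :
    q.1 h = Qv g (fun j => q.1 (Pi.single j 1)) h := by
  set v : Fin g ⊕ Fin g → ZMod 2 := fun j => q.1 (Pi.single j 1) with hv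
  have h2 : (2 : ZMod 2) = 0 := by decide
  have hadd : ∀ a b : H2 g, q.1 (a + b) + Qv g v (a + b) =
      (q.1 a + Qv g v a) + (q.1 b + Qv g v b) := by
    intro a b
    rw [q.2 a b, isQuad_Qv g v a b]
    linear_combination bsym g a b * h2
  let D : H2 g →+ ZMod 2 := AddMonoidHom.mk' (fun h => q.1 h + Qv g v h) hadd
  have hD : ∀ h, D h = 0 := by
    intro h
    have : D h = D (∑ j, Pi.single j (h j)) := by rw [Finset.univ_sum_single]
    rw [this, map_sum]
    apply Finset.sum_eq_zero
    intro j _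
    rcases zmod2_cases (h j) with h0 | h1
    · rw [h0, Pi.single_zero, map_zero]
    · rw [h1]
      show q.1 (Pi.single j 1) + Qv g v (Pi.single j 1) = 0
      rw [Qv_single]
      linear_combination q.1 (Pi.single j 1) * h2
  have := hD h
  simp only [D, AddMonoidHom.mk'_apply] at this
  linear_combination this - Qv g v h * h2

/-- the family of basis evaluation functions -/
noncomputable def fam (g : ℕ) : Fin g ⊕ Fin g → (Om g → ZMod 2) :=
  fun j => ovh g (Pi.single j 1)

open MvPolynomial

/-- the polynomial representing `ovh g h` -/
noncomputable def Ph (g : ℕ) (h : H2 g) : MvPolynomial (Fin g ⊕ Fin g) (ZMod 2) :=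
  (∑ j, C (h j) * X j) + C (∑ i : Fin g, h (Sum.inl i) * h (Sum.inr i))

lemma aeval_Ph (g : ℕ) (h : H2 g) : aeval (fam g) (Ph g h) = ovh g h := by
  funext q
  have : ovh g h q = Qv g (fun j => q.1 (Pi.single j 1)) h := quad_eq_Qv g q h
  rw [this]
  simp only [Ph, map_add, map_sum, map_mul, aeval_X, aeval_C, Qv]
  simp only [Pi.add_apply, Finset.sum_apply, Pi.mul_apply, Pi.algebraMap_apply,
    Algebra.algebraMap_self_apply, fam, ovh]

lemma range_aeval_fam (g : ℕ) : (aeval (fam g)).range = Bg g := by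
  apply le_antisymm
  · rw [← Algebra.adjoin_range_eq_range_aeval]
    apply Algebra.adjoin_le
    rintro _ ⟨j, rfl⟩
    exact Algebra.subset_adjoin ⟨Pi.single j 1, rfl⟩
  · apply Algebra.adjoin_le
    rintro _ ⟨h, rfl⟩
    exact ⟨Ph g h, aeval_Ph g h⟩

/-- squash exponents to ≤ 1 -/
noncomputable def squish {σ : Type*} (d : σ →₀ ℕ) : σ →₀ ℕ :=
  d.mapRange (fun n => min n 1) (by simp)

lemma squish_le {σ : Type*} (d : σ →₀ ℕ) (i : σ) : squish d i ≤ 1 := by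
  simp [squish, Finsupp.mapRange_apply]

lemma mk_X_idem (g : ℕ) (j : Fin g ⊕ Fin g) :
    IsIdempotentElem (Ideal.Quotient.mk (boolIdeal g) (X j)) := by
  show _ * _ = _
  rw [← map_mul, Ideal.Quotient.mk_eq_mk_iff_sub_mem]
  exact Ideal.subset_span ⟨j, by ring⟩

lemma mk_monomial_eq (g : ℕ) (d : Fin g ⊕ Fin g →₀ ℕ) (c : ZMod 2) :
    Ideal.Quotient.mk (boolIdeal g) (monomial d c) =
      Ideal.Quotient.mk (boolIdeal g) (monomial (squish d) c) := by
  rw [monomial_eq, monomial_eq]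
  have hsub : (squish d).support ⊆ d.support := Finsupp.support_mapRange
  rw [Finsupp.prod_of_support_subset (squish d) hsub (fun n e => X n ^ e)
    (fun i _ => pow_zero _)]
  rw [Finsupp.prod]
  rw [map_mul, map_mul, map_prod, map_prod]
  congr 1
  apply Finset.prod_congr rfl
  intro j hj
  rw [map_pow, map_pow]
  have hd : d j ≠ 0 := Finsupp.mem_support_iff.mp hj
  obtain ⟨n, hn⟩ := Nat.exists_eq_succ_of_ne_zero hd
  rw [hn]
  have : squish d j = 1 := by simp [squish, Finsupp.mapRange_apply, hn]
  rw [this, (mk_X_idem g j).pow_succ_eq, pow_one]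

/-- the multilinear reduction of a polynomial -/
noncomputable def mlin (g : ℕ) (p : MvPolynomial (Fin g ⊕ Fin g) (ZMod 2)) :
    MvPolynomial (Fin g ⊕ Fin g) (ZMod 2) :=
  ∑ d ∈ p.support, monomial (squish d) (coeff d p)

lemma mk_mlin (g : ℕ) (p : MvPolynomial (Fin g ⊕ Fin g) (ZMod 2)) :
    Ideal.Quotient.mk (boolIdeal g) (mlin g p) = Ideal.Quotient.mk (boolIdeal g) p := by
  conv_rhs => rw [← support_sum_monomial_coeff p]
  rw [mlin, map_sum, map_sum]
  exact Finset.sum_congr rfl fun d _ => (mk_monomial_eq g d _).symm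

lemma mlin_mem_restrictDegree (g : ℕ) (p : MvPolynomial (Fin g ⊕ Fin g) (ZMod 2)) :
    mlin g p ∈ restrictDegree (Fin g ⊕ Fin g) (ZMod 2) 1 := by
  rw [mem_restrictDegree]
  intro s hs i
  have := support_sum hs
  simp only [Finset.mem_biUnion] at this
  obtain ⟨d, _, hd⟩ := this
  have := support_monomial_subset hd
  simp only [Finset.mem_singleton] at this
  subst this
  exact squish_le d i

lemma boolIdeal_le_ker_eval (g : ℕ) (v : Fin g ⊕ Fin g → ZMod 2) :
    boolIdeal g ≤ RingHom.ker (eval v) := by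
  rw [boolIdeal, Ideal.span_le]
  rintro _ ⟨j, rfl⟩
  simp only [SetLike.mem_coe, RingHom.mem_ker, map_sub, map_pow, eval_X]
  rcases zmod2_cases (v j) with h | h <;> rw [h] <;> ring

lemma mem_boolIdeal_of_eval_zero (g : ℕ) (p : MvPolynomial (Fin g ⊕ Fin g) (ZMod 2))
    (hp : ∀ v : Fin g ⊕ Fin g → ZMod 2, eval v p = 0) : p ∈ boolIdeal g := by
  have hml : ∀ v : Fin g ⊕ Fin g → ZMod 2, eval v (mlin g p) = 0 := by
    intro v
    have hmem : mlin g p - p ∈ boolIdeal g := by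
      rw [← Ideal.Quotient.mk_eq_mk_iff_sub_mem, mk_mlin]
    have := boolIdeal_le_ker_eval g v hmem
    rw [RingHom.mem_ker, map_sub, hp v, sub_zero] at this
    exact this
  have hcard : Fintype.card (ZMod 2) - 1 = 1 := by simp
  have : mlin g p = 0 :=
    eq_zero_of_eval_eq_zero _ (ZMod 2) (mlin g p) hml
      (by rw [hcard]; exact mlin_mem_restrictDegree g p)
  rw [← Ideal.Quotient.eq_zero_iff_mem, ← mk_mlin, this, map_zero]

lemma ker_aeval_fam (g : ℕ) : RingHom.ker (aeval (fam g)) = boolIdeal g := by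
  apply le_antisymm
  · intro p hp
    rw [RingHom.mem_ker] at hp
    apply mem_boolIdeal_of_eval_zero
    intro v
    set q : Om g := ⟨Qv g v, isQuad_Qv g v⟩ with hq
    have h1 : (aeval (fam g) p) q = 0 := by rw [hp]; rfl
    have h2 : (aeval (fam g) p) q = aeval (fun j => fam g j q) p :=
      comp_aeval_apply (f := fam g) (Pi.evalAlgHom (ZMod 2) (fun _ : Om g => ZMod 2) q) p
    have h3 : (fun j => fam g j q) = v := by
      funext j
      show q.1 (Pi.single j 1) = v j
      exact Qv_single g v j
    rw [h2, h3] at h1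
    rw [aeval_def, Algebra.algebraMap_self] at h1
    exact h1
  · rw [boolIdeal, Ideal.span_le]
    rintro _ ⟨j, rfl⟩
    simp only [SetLike.mem_coe, RingHom.mem_ker, map_sub, map_pow, aeval_X]
    funext q
    simp only [Pi.sub_apply, Pi.pow_apply, Pi.zero_apply]
    rcases zmod2_cases (fam g j q) with h | h <;> rw [h] <;> ring

open MvPolynomial in
/-- `B_g ≅ ℤ/2[t_1,…,t_{2g}]/(t_j² - t_j)` as `ℤ/2`-algebras, via `1 ↦ \overline{1}` and
`t_j ↦ \overline{e_j}`, where `e_j` runs over the basis of `H_(2)`. -/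
theorem Bg_iso_boolean_polynomials (g : ℕ) :
    ∃ e : (MvPolynomial (Fin g ⊕ Fin g) (ZMod 2) ⧸ boolIdeal g) ≃ₐ[ZMod 2] Bg g,
      ((e 1 : Bg g) : Om g → ZMod 2) = (fun _ => 1) ∧
      ∀ j, ((e (Ideal.Quotient.mk (boolIdeal g) (X j)) : Bg g) : Om g → ZMod 2)
            = ovh g (Pi.single j 1) := by
  set φ := aeval (R := ZMod 2) (fam g) with hφ
  have hker : RingHom.ker φ = boolIdeal g := ker_aeval_fam g
  refine ⟨(Ideal.quotientEquivAlgOfEq (ZMod 2) hker.symm).trans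
      ((Ideal.quotientKerEquivRange φ).trans (Subalgebra.equivOfEq _ _ (range_aeval_fam g))),
      ?_, ?_⟩
  · rw [map_one]; rfl
  · intro j
    have h1 : ((Ideal.quotientEquivAlgOfEq (ZMod 2) hker.symm)
        (Ideal.Quotient.mk (boolIdeal g) (X j))) =
        Ideal.Quotient.mk (RingHom.ker φ) (X j) := Ideal.quotientEquivAlgOfEq_mk _ _ _
    simp only [AlgEquiv.trans_apply, h1]
    have h2 : ((Ideal.quotientKerEquivRange φ (Ideal.Quotient.mk (RingHom.ker φ) (X j)) :
        φ.range) : Om g → ZMod 2) = φ (X j) := rfl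
    have h3 : ∀ x : φ.range, ((Subalgebra.equivOfEq _ _ (range_aeval_fam g) x : Bg g) :
        Om g → ZMod 2) = (x : Om g → ZMod 2) := fun x => rfl
    rw [h3, h2, hφ, aeval_X]
    rfl
end

section
/- The quotient B_g^{(3)}/B_g^{(2)} is isomorphic to Λ^3 H_{(2)}, via the map identifying the class of the cubic monomial \overline{h_1}·\overline{h_2}·\overline{h_3} with h_1 ∧ h_2 ∧ h_3; in particular this assignment is well defined on classes modulo B_g^{(2)}. -/
/-- The set of affine functions `\overline{h} + ε·\overline{1}` on `Ω_g`. -/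
def Aff (g : ℕ) : Set (Om g → ZMod 2) :=
  {f | ∃ (h : H2 g) (ε : ZMod 2), f = fun q => q.1 h + ε}

/-- `B_g^{(k)}`: the space of Boolean polynomials of degree at most `k`, i.e. the span of
products of at most `k` affine functions. -/
def Bk (g k : ℕ) : Submodule (ZMod 2) (Om g → ZMod 2) :=
  Submodule.span (ZMod 2)
    {f | ∃ l : List (Om g → ZMod 2), l.length ≤ k ∧ (∀ x ∈ l, x ∈ Aff g) ∧ f = l.prod}
/-- The wedge product `a ∧ b ∧ c` as an element of the third exterior power. -/
noncomputable def wedge3 {R M : Type*} [CommRing R] [AddCommGroup M] [Module R M]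
    (a b c : M) : ⋀[R]^3 M :=
  ⟨ExteriorAlgebra.ιMulti R 3 ![a, b, c],
    ExteriorAlgebra.ιMulti_range R 3 ⟨![a, b, c], rfl⟩⟩

/-!
`H_(2)` acts on `Ω_g` by `q ↦ q + bsym a`, and the discrete derivative `D_a f = f(a·q) - f(q)`
lowers the degree filtration by one. Hence the third derivatives `D_a D_b D_c f` of `f ∈ B^(3)`
are constants vanishing on `B^(2)`; on a product of three affine functions `h̄ᵢ + εᵢ` they equal
the permanent, i.e. in characteristic 2 the determinant, of `(bsym a_j hᵢ)`. When the `a_j` are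
symplectic duals of vectors of a basis of `H_(2)`, this determinant is a coordinate of
`h₁ ∧ h₂ ∧ h₃` in the induced basis of `Λ³H_(2)`. This defines `φ`, and `B^(2) ⊆ ker φ`.

Conversely, `h ↦ h̄` is linear up to constants and Boolean functions satisfy `f * f = f`, so
`(h₁, h₂, h₃) ↦ [h̄₁ h̄₂ h̄₃]` is an alternating trilinear map into `B^(3)/B^(2)`. The linear map
`μ` it induces on `Λ³H_(2)` satisfies `μ ∘ φ = [-]` on `B^(3)`, whence `ker φ = B^(2)`.
-/

open exteriorPower Module

namespace BooleanPoly

variable {g : ℕ}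

lemma wedge3_eq_ιMulti {R M : Type*} [CommRing R] [AddCommGroup M] [Module R M] (a b c : M) :
    wedge3 (R := R) a b c = ιMulti R 3 ![a, b, c] :=
  rfl

lemma bsym_add_right (a b c : H2 g) : bsym g a (b + c) = bsym g a b + bsym g a c := by
  simp only [bsym, Pi.add_apply, ← Finset.sum_add_distrib]
  exact Finset.sum_congr rfl fun _ _ => by ring

lemma bsym_single_swap (s : Fin g ⊕ Fin g) (h : H2 g) :
    bsym g (Pi.single s.swap 1) h = h s := by
  rcases s with i | i <;> simp [bsym, Pi.single_apply]

def translate (a : H2 g) (q : Om g) : Om g :=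
  ⟨fun x => q.1 x + bsym g a x, fun x y => by simp only [q.2 x y, bsym_add_right]; ring⟩

/-- Any base point would do: the third derivatives of cubics are constant. -/
def baseQuad (g : ℕ) : Om g :=
  ⟨fun x => ∑ i, x (Sum.inl i) * x (Sum.inr i), fun a b => by
    simp only [bsym, Pi.add_apply, ← Finset.sum_add_distrib]
    exact Finset.sum_congr rfl fun _ _ => by ring⟩

lemma ovh_add (x y : H2 g) : ovh g (x + y) = ovh g x + ovh g y + fun _ => bsym g x y :=
  funext fun q => q.2 x y

lemma ovh_zero : ovh g 0 = 0 := funext fun q => by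
  have h := q.2 0 0
  simp only [bsym, Pi.zero_apply, zero_mul, add_zero, Finset.sum_const_zero] at h
  show q.1 0 = 0
  linear_combination -h

lemma ovh_mem_Aff (h : H2 g) : ovh g h ∈ Aff g :=
  ⟨h, 0, by ext; simp [ovh]⟩

lemma Bk_mono {j k : ℕ} (h : j ≤ k) : Bk g j ≤ Bk g k :=
  Submodule.span_mono fun _ ⟨l, hl, ha, hf⟩ => ⟨l, hl.trans h, ha, hf⟩

lemma Bk_mul_le (j k : ℕ) : Bk g j * Bk g k ≤ Bk g (j + k) := by
  rw [Bk, Bk, Submodule.span_mul_span]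
  refine Submodule.span_mono ?_
  rintro _ ⟨_, ⟨l, hl, ha, rfl⟩, _, ⟨m, hm, hb, rfl⟩, rfl⟩
  refine ⟨l ++ m, by simp only [List.length_append]; omega, fun x hx => ?_, List.prod_append.symm⟩
  rcases List.mem_append.1 hx with hx | hx
  exacts [ha x hx, hb x hx]

lemma mul_mem_Bk {j k : ℕ} {f h : Om g → ZMod 2} (hf : f ∈ Bk g j) (hh : h ∈ Bk g k) :
    f * h ∈ Bk g (j + k) :=
  Bk_mul_le j k (Submodule.mul_mem_mul hf hh)

lemma list_prod_mem_Bk {l : List (Om g → ZMod 2)} (hl : ∀ x ∈ l, x ∈ Aff g) :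
    l.prod ∈ Bk g l.length :=
  Submodule.subset_span ⟨l, le_rfl, hl, rfl⟩

lemma one_mem_Bk (k : ℕ) : (1 : Om g → ZMod 2) ∈ Bk g k :=
  Submodule.subset_span ⟨[], Nat.zero_le k, by simp, rfl⟩

lemma const_mem_Bk_zero (c : ZMod 2) : (fun _ => c : Om g → ZMod 2) ∈ Bk g 0 := by
  simpa [Pi.smul_def] using Submodule.smul_mem _ c (one_mem_Bk (g := g) 0)

lemma mem_Bk_one_of_mem_Aff {f : Om g → ZMod 2} (hf : f ∈ Aff g) : f ∈ Bk g 1 := by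
  simpa using list_prod_mem_Bk (l := [f]) (by simpa using hf)

lemma prod_mem_Bk {ι : Type*} (s : Finset ι) {f : ι → Om g → ZMod 2}
    (hf : ∀ i ∈ s, f i ∈ Bk g 1) : ∏ i ∈ s, f i ∈ Bk g s.card := by
  induction s using Finset.cons_induction with
  | empty => exact one_mem_Bk 0
  | cons i s hi ih =>
    rw [Finset.prod_cons, Finset.card_cons, add_comm]
    exact mul_mem_Bk (hf i (Finset.mem_cons_self i s))
      (ih fun j hj => hf j (Finset.mem_cons_of_mem hj))

lemma prod_ovh_mem_Bk {n : ℕ} (h : Fin n → H2 g) : ∏ i, ovh g (h i) ∈ Bk g n := by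
  simpa using prod_mem_Bk Finset.univ fun i _ => mem_Bk_one_of_mem_Aff (ovh_mem_Aff (h i))

lemma prod_mem_Bk_of_eq {ι : Type*} [Fintype ι] [DecidableEq ι] {x : ι → Om g → ZMod 2}
    (hx : ∀ i, x i ∈ Bk g 1) {i j : ι} (hij : i ≠ j) (h : x i = x j) :
    ∏ k, x k ∈ Bk g (Fintype.card ι - 1) := by
  have hidem : x i * x i = x i := funext fun q => (by decide : ∀ t : ZMod 2, t * t = t) _
  have hi : i ∈ Finset.univ.erase j := Finset.mem_erase.2 ⟨hij, Finset.mem_univ i⟩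
  rw [← Finset.mul_prod_erase _ x (Finset.mem_univ j), ← Finset.mul_prod_erase _ x hi,
    ← mul_assoc, ← h, hidem, Finset.mul_prod_erase _ x hi]
  simpa [Finset.card_erase_of_mem] using prod_mem_Bk (Finset.univ.erase j) fun k _ => hx k

lemma prod_sub_prod_mem_Bk_two {x y : Fin 3 → Om g → ZMod 2} (hx : ∀ i, x i ∈ Bk g 1)
    (hy : ∀ i, y i ∈ Bk g 1) (hxy : ∀ i, x i - y i ∈ Bk g 0) :
    ∏ i, x i - ∏ i, y i ∈ Bk g 2 := by
  rw [Fin.prod_univ_three, Fin.prod_univ_three]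
  have htelescope : x 0 * x 1 * x 2 - y 0 * y 1 * y 2 =
      (x 0 - y 0) * x 1 * x 2 + y 0 * (x 1 - y 1) * x 2 + y 0 * y 1 * (x 2 - y 2) := by ring
  rw [htelescope]
  have h₀ : (x 0 - y 0) * x 1 ∈ Bk g 1 := mul_mem_Bk (j := 0) (k := 1) (hxy 0) (hx 1)
  have h₁ : y 0 * (x 1 - y 1) ∈ Bk g 1 := mul_mem_Bk (j := 1) (k := 0) (hy 0) (hxy 1)
  have h₂ : y 0 * y 1 ∈ Bk g 2 := mul_mem_Bk (j := 1) (k := 1) (hy 0) (hy 1)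
  exact add_mem (add_mem (mul_mem_Bk (j := 1) (k := 1) h₀ (hx 2))
    (mul_mem_Bk (j := 1) (k := 1) h₁ (hx 2))) (mul_mem_Bk (j := 2) (k := 0) h₂ (hxy 2))

def diff (a : H2 g) : (Om g → ZMod 2) →ₗ[ZMod 2] Om g → ZMod 2 :=
  LinearMap.funLeft (ZMod 2) (ZMod 2) (translate a) - LinearMap.id

lemma diff_apply (a : H2 g) (f : Om g → ZMod 2) (q : Om g) :
    diff a f q = f (translate a q) - f q := rfl

lemma diff_one (a : H2 g) : diff a 1 = 0 := by
  ext; simp [diff_apply]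

lemma diff_mul (a : H2 g) (f h : Om g → ZMod 2) :
    diff a (f * h) = (f ∘ translate a) * diff a h + diff a f * h := by
  ext q; simp only [diff_apply, Pi.mul_apply, Function.comp_apply, Pi.add_apply]; ring

lemma diff_affine (a h : H2 g) (ε : ZMod 2) :
    diff a (fun q => q.1 h + ε) = fun _ => bsym g a h := by
  ext q; simp only [diff_apply, translate]; ring

lemma comp_translate_mem_Aff {f : Om g → ZMod 2} (hf : f ∈ Aff g) (a : H2 g) :
    f ∘ translate a ∈ Aff g := by
  obtain ⟨h, ε, rfl⟩ := hf
  exact ⟨h, bsym g a h + ε, by ext q; simp only [Function.comp_apply, translate]; ring⟩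

lemma Bk_zero_le_ker_diff (a : H2 g) : Bk g 0 ≤ LinearMap.ker (diff a) := by
  refine Submodule.span_le.2 ?_
  rintro _ ⟨l, hl, -, rfl⟩
  rw [List.length_eq_zero_iff.1 (Nat.le_zero.1 hl)]
  exact diff_one a

lemma diff_list_prod_mem_Bk (a : H2 g) {l : List (Om g → ZMod 2)} (hl : ∀ x ∈ l, x ∈ Aff g)
    {k : ℕ} (hk : l.length ≤ k + 1) : diff a l.prod ∈ Bk g k := by
  induction l generalizing k with
  | nil => simp [diff_one]
  | cons x t ih =>
    have ht : ∀ y ∈ t, y ∈ Aff g := fun y hy => hl y (List.mem_cons_of_mem x hy)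
    have htk : t.length ≤ k := by simpa using hk
    obtain ⟨h, ε, rfl⟩ := hl x List.mem_cons_self
    rw [List.prod_cons, diff_mul, diff_affine]
    refine add_mem ?_ ?_
    · cases k with
      | zero =>
        rw [List.length_eq_zero_iff.1 (Nat.le_zero.1 htk), List.prod_nil, diff_one, mul_zero]
        exact zero_mem _
      | succ k =>
        simpa [add_comm] using mul_mem_Bk
          (mem_Bk_one_of_mem_Aff (comp_translate_mem_Aff ⟨h, ε, rfl⟩ a)) (ih ht htk)
    · simpa using mul_mem_Bk (const_mem_Bk_zero _) (Bk_mono htk (list_prod_mem_Bk ht))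

lemma diff_mem_Bk (a : H2 g) {k : ℕ} {f : Om g → ZMod 2} (hf : f ∈ Bk g (k + 1)) :
    diff a f ∈ Bk g k := by
  refine (Submodule.span_le (p := (Bk g k).comap (diff a))).2 ?_ hf
  rintro _ ⟨l, hl, ha, rfl⟩
  exact diff_list_prod_mem_Bk a ha hl

def diff3 (a : Fin 3 → H2 g) : (Om g → ZMod 2) →ₗ[ZMod 2] Om g → ZMod 2 :=
  diff (a 0) ∘ₗ diff (a 1) ∘ₗ diff (a 2)

lemma diff3_eq_zero_of_mem_Bk_two (a : Fin 3 → H2 g) {f : Om g → ZMod 2} (hf : f ∈ Bk g 2) :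
    diff3 a f = 0 :=
  Bk_zero_le_ker_diff (a 0) (diff_mem_Bk (a 1) (diff_mem_Bk (a 2) hf))

lemma diff3_prod_affine (a h : Fin 3 → H2 g) (ε : Fin 3 → ZMod 2) (q : Om g) :
    diff3 a (∏ i, fun q => q.1 (h i) + ε i) q =
      (Matrix.of fun i j => bsym g (a j) (h i)).det := by
  simp only [diff3, LinearMap.comp_apply, diff_apply, translate, Pi.mul_apply,
    Fin.prod_univ_three, Matrix.det_fin_three, Matrix.of_apply]
  grind

/-- A linear lift of `h ↦ h̄`, which is only additive up to constants (`ovh_add`). -/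
def linearPart (g : ℕ) : H2 g →ₗ[ZMod 2] Om g → ZMod 2 :=
  Fintype.linearCombination (ZMod 2) fun s => ovh g (Pi.single s 1)

lemma linearPart_mem_Bk_one (h : H2 g) : linearPart g h ∈ Bk g 1 := by
  rw [linearPart, Fintype.linearCombination_apply]
  exact sum_mem fun s _ => Submodule.smul_mem _ _ (mem_Bk_one_of_mem_Aff (ovh_mem_Aff _))

lemma ovh_sub_linearPart_mem_Bk_zero (h : H2 g) : ovh g h - linearPart g h ∈ Bk g 0 := by
  rw [← Finset.univ_sum_single h]
  refine Finset.sum_induction _ (fun x => ovh g x - linearPart g x ∈ Bk g 0)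
    (fun x y hx hy => ?_) (by simp [ovh_zero]) fun s _ => ?_
  · have hxy := add_mem (add_mem hx hy) (const_mem_Bk_zero (g := g) (bsym g x y))
    rw [ovh_add, map_add]
    convert hxy using 1
    ring
  · rcases (by decide : ∀ c : ZMod 2, c = 0 ∨ c = 1) (h s) with hs | hs <;>
      simp [hs, ovh_zero, linearPart]

def cubeClass (g : ℕ) : H2 g [⋀^Fin 3]→ₗ[ZMod 2] ((Om g → ZMod 2) ⧸ Bk g 2) where
  toMultilinearMap := (Bk g 2).mkQ.compMultilinearMap
    ((MultilinearMap.mkPiAlgebra (ZMod 2) (Fin 3) _).compLinearMap fun _ => linearPart g)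
  map_eq_zero_of_eq' v i j hv hij := by
    simpa [Submodule.Quotient.mk_eq_zero] using
      prod_mem_Bk_of_eq (fun k => linearPart_mem_Bk_one (v k)) hij (congrArg _ hv)

lemma cubeClass_apply (v : Fin 3 → H2 g) :
    cubeClass g v = (Bk g 2).mkQ (∏ i, linearPart g (v i)) := rfl

section CubicPart

variable {I : Type*} [LinearOrder I] [Fintype I]

noncomputable def cubicPart (b : Basis I (ZMod 2) (H2 g)) (a : I → H2 g) :
    (Om g → ZMod 2) →ₗ[ZMod 2] ⋀[ZMod 2]^3 (H2 g) :=
  Fintype.linearCombination (ZMod 2) (b.exteriorPower 3) ∘ₗ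
    LinearMap.pi fun s => LinearMap.proj (baseQuad g) ∘ₗ
      diff3 (a ∘ Set.powersetCard.ofFinEmbEquiv.symm s)

lemma cubicPart_apply (b : Basis I (ZMod 2) (H2 g)) (a : I → H2 g) (f : Om g → ZMod 2) :
    cubicPart b a f = ∑ s, diff3 (a ∘ Set.powersetCard.ofFinEmbEquiv.symm s) f (baseQuad g) •
      b.exteriorPower 3 s := by
  simp [cubicPart, Fintype.linearCombination_apply]

lemma cubicPart_eq_zero_of_mem_Bk_two (b : Basis I (ZMod 2) (H2 g)) (a : I → H2 g)
    {f : Om g → ZMod 2} (hf : f ∈ Bk g 2) : cubicPart b a f = 0 := by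
  simp [cubicPart_apply, diff3_eq_zero_of_mem_Bk_two _ hf]

variable {b : Basis I (ZMod 2) (H2 g)} {a : I → H2 g}

lemma cubicPart_prod_affine (ha : ∀ k h, bsym g (a k) h = b.coord k h) (h : Fin 3 → H2 g)
    (ε : Fin 3 → ZMod 2) :
    cubicPart b a (∏ i, fun q => q.1 (h i) + ε i) = ιMulti (ZMod 2) 3 h := by
  conv_rhs => rw [← (b.exteriorPower 3).sum_repr (ιMulti (ZMod 2) 3 h)]
  refine (cubicPart_apply b a _).trans (Finset.sum_congr rfl fun s _ => ?_)
  rw [diff3_prod_affine, basis_repr_apply, ιMultiDual_apply_ιMulti]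
  simp [ha]

lemma cubicPart_prod_ovh (ha : ∀ k h, bsym g (a k) h = b.coord k h) (h : Fin 3 → H2 g) :
    cubicPart b a (∏ i, ovh g (h i)) = ιMulti (ZMod 2) 3 h := by
  change cubicPart b a (∏ i, fun q => q.1 (h i)) = _
  simpa using cubicPart_prod_affine ha h 0

lemma cubeClass_lift_cubicPart (ha : ∀ k h, bsym g (a k) h = b.coord k h)
    {f : Om g → ZMod 2} (hf : f ∈ Bk g 3) :
    alternatingMapLinearEquiv (cubeClass g) (cubicPart b a f) = (Bk g 2).mkQ f := by
  refine LinearMap.eqOn_span (f := alternatingMapLinearEquiv (cubeClass g) ∘ₗ cubicPart b a)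
    (g := (Bk g 2).mkQ) ?_ hf
  rintro _ ⟨l, hl, haff, rfl⟩
  rcases (by omega : l.length ≤ 2 ∨ l.length = 3) with hl2 | hl3
  · have h2 := Bk_mono hl2 (list_prod_mem_Bk haff)
    simp [cubicPart_eq_zero_of_mem_Bk_two b a h2, (Submodule.Quotient.mk_eq_zero _).2 h2]
  obtain ⟨x₀, x₁, x₂, rfl⟩ := List.length_eq_three.1 hl3
  choose h ε hhε using fun i => haff (![x₀, x₁, x₂] i) (by fin_cases i <;> simp)
  have hprod : [x₀, x₁, x₂].prod = ∏ i, fun q => q.1 (h i) + ε i := by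
    rw [← funext hhε]
    simp [Fin.prod_univ_three, mul_assoc]
  simp only [LinearMap.comp_apply, hprod, cubicPart_prod_affine ha,
    alternatingMapLinearEquiv_apply_ιMulti, cubeClass_apply, Submodule.mkQ_apply,
    Submodule.Quotient.eq]
  refine prod_sub_prod_mem_Bk_two (fun i => linearPart_mem_Bk_one (h i))
    (fun i => mem_Bk_one_of_mem_Aff ⟨h i, ε i, rfl⟩) fun i => ?_
  convert sub_mem (neg_mem (ovh_sub_linearPart_mem_Bk_zero (h i))) (const_mem_Bk_zero (ε i))
    using 1
  ext q
  simp only [Pi.sub_apply, neg_sub, ovh]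
  ring

lemma cubicPart_eq_zero_iff (ha : ∀ k h, bsym g (a k) h = b.coord k h)
    {f : Om g → ZMod 2} (hf : f ∈ Bk g 3) : cubicPart b a f = 0 ↔ f ∈ Bk g 2 := by
  refine ⟨fun h0 => ?_, cubicPart_eq_zero_of_mem_Bk_two b a⟩
  have hμ := cubeClass_lift_cubicPart ha hf
  rwa [h0, map_zero, eq_comm, Submodule.mkQ_apply, Submodule.Quotient.mk_eq_zero] at hμ

lemma cubicPart_comp_subtype_surjective (ha : ∀ k h, bsym g (a k) h = b.coord k h) :
    Function.Surjective (cubicPart b a ∘ₗ (Bk g 3).subtype) := by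
  rw [← LinearMap.range_eq_top, eq_top_iff, ← ιMulti_span, Submodule.span_le]
  rintro _ ⟨v, rfl⟩
  exact ⟨⟨_, prod_ovh_mem_Bk v⟩, cubicPart_prod_ovh ha v⟩

end CubicPart

noncomputable def stdBasis (g : ℕ) : Basis (Fin (g + g)) (ZMod 2) (H2 g) :=
  (Pi.basisFun (ZMod 2) (Fin g ⊕ Fin g)).reindex finSumFinEquiv

def symplecticDual (g : ℕ) (k : Fin (g + g)) : H2 g :=
  Pi.single (finSumFinEquiv.symm k).swap 1

lemma bsym_symplecticDual (k : Fin (g + g)) (h : H2 g) :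
    bsym g (symplecticDual g k) h = (stdBasis g).coord k h := by
  simp [symplecticDual, stdBasis, bsym_single_swap]

end BooleanPoly

/-- `B_g^{(3)}/B_g^{(2)} ≅ Λ³H_(2)`, via `[\overline{h₁}·\overline{h₂}·\overline{h₃}] ↦
h₁ ∧ h₂ ∧ h₃`.  We state this as: there is a surjective `ℤ/2`-linear map
`φ : B_g^{(3)} → Λ³H_(2)` with kernel exactly `B_g^{(2)}`, sending each cubic monomial
`\overline{h₁}\overline{h₂}\overline{h₃}` to `h₁ ∧ h₂ ∧ h₃`. -/
theorem cubic_mod_quadratic_iso (g : ℕ) :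
    ∃ φ : (Bk g 3) →ₗ[ZMod 2] ⋀[ZMod 2]^3 (H2 g),
      Function.Surjective φ ∧
      (∀ f : Bk g 3, φ f = 0 ↔ (f : Om g → ZMod 2) ∈ Bk g 2) ∧
      (∀ (h₁ h₂ h₃ : H2 g) (hm : ovh g h₁ * ovh g h₂ * ovh g h₃ ∈ Bk g 3),
        φ ⟨ovh g h₁ * ovh g h₂ * ovh g h₃, hm⟩ = wedge3 h₁ h₂ h₃) := by
  open BooleanPoly in
  refine ⟨cubicPart (stdBasis g) (symplecticDual g) ∘ₗ (Bk g 3).subtype,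
    cubicPart_comp_subtype_surjective bsym_symplecticDual,
    fun f => cubicPart_eq_zero_iff bsym_symplecticDual f.2, fun h₁ h₂ h₃ _ => ?_⟩
  simpa [Fin.prod_univ_three, BooleanPoly.wedge3_eq_ιMulti] using
    BooleanPoly.cubicPart_prod_ovh BooleanPoly.bsym_symplecticDual ![h₁, h₂, h₃]
end

section
/- Let B_g^{(1)} be the group of affine Z/2-valued functions on Ω_g, with special element the constant function \overline{1}, and let A_1(B_g^{(1)}, \overline{1}) be the abelian group generated by Y[z_1,z_2,z_3] (z_i ∈ B_g^{(1)}) modulo cyclic invariance, antisymmetry, multilinearity in each entry, and the slide relation Y[z,z,w] = Y[\overline{1},z,w]. Then the map γ sending Y[z_1,z_2,z_3] to the product z_1 z_2 z_3 is a well-defined isomorphism from A_1(B_g^{(1)}, \overline{1}) onto B_g^{(3)}, the space of Boolean polynomials of degree at most 3. -/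
/-- The relations defining `A_1(G,s)`: cyclic invariance, antisymmetry, multilinearity,
and the slide relation `Y[z,z,w] = Y[s,z,w]`. -/
def YRel (G : Type*) [AddCommGroup G] (s : G) : Set (FreeAbelianGroup (G × G × G)) :=
  {x | ∃ z₁ z₂ z₃ : G, x = FreeAbelianGroup.of (z₁, z₂, z₃)
        - FreeAbelianGroup.of (z₂, z₃, z₁)} ∪
  {x | ∃ z₁ z₂ z₃ : G, x = FreeAbelianGroup.of (z₁, z₂, z₃)
        + FreeAbelianGroup.of (z₂, z₁, z₃)} ∪
  {x | ∃ z₀ z₁ z₂ z₃ : G, x = FreeAbelianGroup.of (z₀ + z₁, z₂, z₃)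
        - FreeAbelianGroup.of (z₀, z₂, z₃) - FreeAbelianGroup.of (z₁, z₂, z₃)} ∪
  {x | ∃ z₁ z₂ : G, x = FreeAbelianGroup.of (z₁, z₁, z₂)
        - FreeAbelianGroup.of (s, z₁, z₂)}

/-- The abelian group `A_1(G,s)`, generated by symbols `Y[z₁,z₂,z₃]` (`zᵢ ∈ G`) modulo
cyclic invariance, antisymmetry, multilinearity and the slide relation. -/
def A1 (G : Type*) [AddCommGroup G] (s : G) :=
  FreeAbelianGroup (G × G × G) ⧸ AddSubgroup.closure (YRel G s)

instance (G : Type*) [AddCommGroup G] (s : G) : AddCommGroup (A1 G s) :=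
  QuotientAddGroup.Quotient.addCommGroup _

/-- The generator `Y[z₁,z₂,z₃]` of `A_1(G,s)`. -/
def Ygen {G : Type*} [AddCommGroup G] (s : G) (z₁ z₂ z₃ : G) : A1 G s :=
  QuotientAddGroup.mk' _ (FreeAbelianGroup.of (z₁, z₂, z₃))

/-- The constant function `\overline{1}` as an element of `B_g^{(1)}` (the empty product). -/
def ov1B (g : ℕ) : Bk g 1 :=
  ⟨(fun _ => 1), Submodule.subset_span ⟨[], by simp, by simp, rfl⟩⟩

theorem AddMonoidHom.apply_mem_of_span_eq_top {M N : Type*} [AddCommGroup M]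
    [Module (ZMod 2) M] [AddCommGroup N] [Module (ZMod 2) N] (f : M →+ N) {S : Set M}
    (hS : Submodule.span (ZMod 2) S = ⊤) {P : Submodule (ZMod 2) N} (h : ∀ x ∈ S, f x ∈ P)
    (x : M) : f x ∈ P := by
  have := (Submodule.map_span_le (f.toZModLinearMap 2) S P).2 h
  rw [hS, Submodule.map_top] at this
  exact this ⟨x, rfl⟩

-- At the point where exactly the `F i` with `i ∈ S` are `1`, the monomial of `T` is `1` if
-- `T ⊆ S` and `0` otherwise: the evaluation matrix is unitriangular.
theorem linearIndependent_prod_of_exists_indicator {X I R : Type*} [CommRing R]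
    [DecidableEq I] (F : I → X → R)
    (hF : ∀ S : Finset I, ∃ x, ∀ i, F i x = if i ∈ S then 1 else 0) :
    LinearIndependent R fun T : Finset I => ∏ i ∈ T, F i := by
  rw [linearIndependent_iff]
  intro l hl
  ext S
  induction S using Finset.strongInduction with
  | H S ih =>
    obtain ⟨x, hx⟩ := hF S
    have hval : ∀ T : Finset I, (∏ i ∈ T, F i) x = if T ⊆ S then 1 else 0 := by
      intro T
      rw [Finset.prod_apply]
      split_ifs with hT
      · exact Finset.prod_eq_one fun i hi => by rw [hx, if_pos (hT hi)]
      · obtain ⟨i, hiT, hiS⟩ := Finset.not_subset.1 hT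
        exact Finset.prod_eq_zero hiT (by rw [hx, if_neg hiS])
    have hsum := congrFun hl x
    rw [Finsupp.linearCombination_apply, Finsupp.sum, Finset.sum_apply] at hsum
    simp only [Pi.smul_apply, hval, smul_eq_mul, mul_ite, mul_one, mul_zero,
      Pi.zero_apply] at hsum
    rw [Finset.sum_eq_single S (fun T _ hTS => ?_) (fun hS => ?_), if_pos subset_rfl] at hsum
    · exact hsum
    · split_ifs with hT
      · exact ih T (Finset.ssubset_iff_subset_ne.2 ⟨hT, hTS⟩)
      · rfl
    · rw [Finsupp.notMem_support_iff.1 hS, ite_self]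

namespace A1

variable {G : Type*} [AddCommGroup G] {s : G}

theorem mk_eq_zero_of_mem_YRel {x : FreeAbelianGroup (G × G × G)} (hx : x ∈ YRel G s) :
    (QuotientAddGroup.mk' (AddSubgroup.closure (YRel G s)) x : A1 G s) = 0 :=
  (QuotientAddGroup.eq_zero_iff x).2 (AddSubgroup.subset_closure hx)

theorem Ygen_rotate (a b c : G) : Ygen s a b c = Ygen s b c a := by
  have := mk_eq_zero_of_mem_YRel (s := s) (Or.inl (Or.inl (Or.inl ⟨a, b, c, rfl⟩)))
  rwa [map_sub, sub_eq_zero] at this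

theorem Ygen_swap (a b c : G) : Ygen s a b c = -Ygen s b a c := by
  have := mk_eq_zero_of_mem_YRel (s := s) (Or.inl (Or.inl (Or.inr ⟨a, b, c, rfl⟩)))
  rwa [map_add, add_eq_zero_iff_eq_neg] at this

theorem Ygen_add_left (a a' b c : G) :
    Ygen s (a + a') b c = Ygen s a b c + Ygen s a' b c := by
  have := mk_eq_zero_of_mem_YRel (s := s) (Or.inl (Or.inr ⟨a, a', b, c, rfl⟩))
  rwa [map_sub, map_sub, sub_sub, sub_eq_zero] at this

theorem Ygen_slide (z w : G) : Ygen s z z w = Ygen s s z w := by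
  have := mk_eq_zero_of_mem_YRel (s := s) (Or.inr ⟨z, w, rfl⟩)
  rwa [map_sub, sub_eq_zero] at this

theorem Ygen_add_mid (a b b' c : G) :
    Ygen s a (b + b') c = Ygen s a b c + Ygen s a b' c := by
  rw [Ygen_swap, Ygen_add_left, neg_add, ← Ygen_swap, ← Ygen_swap]

theorem Ygen_add_right (a b c c' : G) :
    Ygen s a b (c + c') = Ygen s a b c + Ygen s a b c' := by
  rw [← Ygen_rotate, Ygen_add_left, Ygen_rotate c, Ygen_rotate c']

theorem Ygen_zero_left (b c : G) : Ygen s 0 b c = 0 := by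
  simpa using Ygen_add_left (s := s) 0 0 b c

@[elab_as_elim]
theorem induction_on {p : A1 G s → Prop} (x : A1 G s) (zero : p 0)
    (gen : ∀ a b c, p (Ygen s a b c)) (add : ∀ x y, p x → p y → p (x + y))
    (neg : ∀ x, p x → p (-x)) : p x := by
  obtain ⟨x, rfl⟩ := QuotientAddGroup.mk'_surjective _ x
  induction x using FreeAbelianGroup.induction_on with
  | zero => rw [map_zero]; exact zero
  | of t => exact gen t.1 t.2.1 t.2.2
  | neg t ht => rw [map_neg]; exact neg _ ht
  | add x y hx hy => rw [map_add]; exact add _ _ hx hy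

def lift {M : Type*} [AddCommGroup M] (f : G → G → G → M)
    (rotate : ∀ a b c, f a b c = f b c a) (swap : ∀ a b c, f a b c = -f b a c)
    (add_left : ∀ a a' b c, f (a + a') b c = f a b c + f a' b c)
    (slide : ∀ z w, f z z w = f s z w) : A1 G s →+ M :=
  QuotientAddGroup.lift _ (FreeAbelianGroup.lift fun t => f t.1 t.2.1 t.2.2) <| by
    rw [AddSubgroup.closure_le]
    rintro _ (((⟨a, b, c, rfl⟩ | ⟨a, b, c, rfl⟩) | ⟨a, a', b, c, rfl⟩) | ⟨z, w, rfl⟩) <;>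
      simp only [SetLike.mem_coe, AddMonoidHom.mem_ker, map_add, map_sub,
        FreeAbelianGroup.lift_apply_of]
    · rw [rotate, sub_self]
    · rw [swap, neg_add_cancel]
    · rw [add_left, sub_sub, sub_self]
    · rw [slide, sub_self]

theorem lift_Ygen {M : Type*} [AddCommGroup M] (f : G → G → G → M) (rotate swap add_left slide)
    (a b c : G) : lift (s := s) f rotate swap add_left slide (Ygen s a b c) = f a b c :=
  FreeAbelianGroup.lift_apply_of _ _

section

variable (s)

-- Lists of length other than three go to the junk value `0`.
def Y3 : List G → A1 G s
  | [a, b, c] => Ygen s a b c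
  | _ => 0

def Ypad (l : List G) : A1 G s := Y3 s (List.replicate (3 - l.length) s ++ l)

-- `Finset.toList` picks an arbitrary order, which is harmless as `Ygen` is symmetric here.
noncomputable def Ymon {I : Type*} (u : I → G) (T : Finset I) : A1 G s := Ypad s (T.toList.map u)

end

variable [Module (ZMod 2) G]

instance : Module (ZMod 2) (A1 G s) :=
  AddCommGroup.zmodModule fun x => by
    induction x using A1.induction_on with
    | zero => exact smul_zero 2
    | gen a b c => rw [two_nsmul, ← Ygen_add_left, ZModModule.add_self, Ygen_zero_left]
    | add x y hx hy => rw [smul_add, hx, hy, add_zero]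
    | neg x hx => rw [smul_neg, hx, neg_zero]

theorem Ygen_comm12 (a b c : G) : Ygen s a b c = Ygen s b a c := by
  rw [Ygen_swap, ZModModule.neg_eq_self]

theorem Ygen_comm23 (a b c : G) : Ygen s a b c = Ygen s a c b := by
  rw [Ygen_rotate a c b, Ygen_comm12 c b a, Ygen_rotate]

theorem eq_top_of_Ygen_mem {S : Set G} (hS : Submodule.span (ZMod 2) S = ⊤)
    {P : Submodule (ZMod 2) (A1 G s)} (h : ∀ a ∈ S, ∀ b ∈ S, ∀ c ∈ S, Ygen s a b c ∈ P) :
    P = ⊤ := by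
  have h₃ : ∀ a ∈ S, ∀ b ∈ S, ∀ c, Ygen s a b c ∈ P := fun a ha b hb =>
    (AddMonoidHom.mk' _ (Ygen_add_right a b)).apply_mem_of_span_eq_top hS (h a ha b hb)
  have h₂ : ∀ a ∈ S, ∀ b c, Ygen s a b c ∈ P := fun a ha b c =>
    (AddMonoidHom.mk' (Ygen s a · c) (Ygen_add_mid a · · c)).apply_mem_of_span_eq_top hS
      (fun b hb => h₃ a ha b hb c) b
  have h₁ : ∀ a b c, Ygen s a b c ∈ P := fun a b c =>
    (AddMonoidHom.mk' (Ygen s · b c) (Ygen_add_left · · b c)).apply_mem_of_span_eq_top hS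
      (fun a ha => h₂ a ha b c) a
  refine Submodule.eq_top_iff'.2 fun x => ?_
  induction x using A1.induction_on with
  | zero => exact P.zero_mem
  | gen a b c => exact h₁ a b c
  | add x y hx hy => exact P.add_mem hx hy
  | neg x hx => exact P.neg_mem hx

theorem Y3_eq_of_perm {l : List G} {a b c : G} (h : l.Perm [a, b, c]) :
    Y3 s l = Ygen s a b c := by
  have := List.mem_permutations.2 h
  simp only [List.permutations, List.permutationsAux, List.foldr_cons, List.permutationsAux.rec,
    List.permutationsAux2, List.foldr_nil, id_eq, List.mem_cons, List.not_mem_nil, or_false] at this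
  rcases this with rfl | rfl | rfl | rfl | rfl | rfl
  · rfl
  · exact Ygen_comm12 b a c
  · exact (Ygen_comm12 c b a).trans (Ygen_rotate a b c).symm
  · exact (Ygen_rotate a b c).symm
  · exact Ygen_rotate c a b
  · exact Ygen_comm23 a c b

variable {I : Type*} [DecidableEq I] (u : I → G)

theorem Ymon_toFinset {l : List I} (hl : l.Nodup) {a b c : G}
    (h : (List.replicate (3 - l.length) s ++ l.map u).Perm [a, b, c]) :
    Ymon s u l.toFinset = Ygen s a b c := by
  refine Y3_eq_of_perm (List.Perm.trans ?_ h)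
  rw [List.length_map, Finset.length_toList, List.toFinset_card_of_nodup hl]
  exact ((List.toFinset_toList hl).map u).append_left _

theorem Ymon_empty : Ymon s u ∅ = Ygen s s s s := by
  simpa using Ymon_toFinset (s := s) u (l := []) List.nodup_nil (List.Perm.refl _)

theorem Ymon_singleton (i : I) : Ymon s u {i} = Ygen s s s (u i) := by
  simpa using Ymon_toFinset (s := s) u (l := [i]) (List.nodup_singleton i) (List.Perm.refl _)

theorem Ymon_pair {i j : I} (hij : i ≠ j) : Ymon s u {i, j} = Ygen s s (u i) (u j) := by
  simpa using Ymon_toFinset (s := s) u (l := [i, j]) (by simp [hij]) (List.Perm.refl _)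

theorem Ymon_triple {i j k : I} (hij : i ≠ j) (hik : i ≠ k) (hjk : j ≠ k) :
    Ymon s u {i, j, k} = Ygen s (u i) (u j) (u k) := by
  simpa using Ymon_toFinset (s := s) u (l := [i, j, k]) (by simp [hij, hik, hjk])
    (List.Perm.refl _)

theorem Ygen_s_s_mem_Ymon {w : G} (hw : w ∈ insert s (Set.range u)) :
    Ygen s s s w ∈ Ymon s u '' {T | T.card ≤ 3} := by
  rcases hw with rfl | ⟨i, rfl⟩
  · exact ⟨∅, by simp, Ymon_empty u⟩
  · exact ⟨{i}, by simp, Ymon_singleton u i⟩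

theorem Ygen_s_mem_Ymon {v w : G} (hv : v ∈ insert s (Set.range u))
    (hw : w ∈ insert s (Set.range u)) : Ygen s s v w ∈ Ymon s u '' {T | T.card ≤ 3} := by
  rcases hv with rfl | ⟨i, rfl⟩
  · exact Ygen_s_s_mem_Ymon u hw
  rcases hw with rfl | ⟨j, rfl⟩
  · rw [Ygen_comm23]
    exact Ygen_s_s_mem_Ymon u (Set.mem_insert_of_mem _ ⟨i, rfl⟩)
  by_cases hij : i = j
  · rw [hij, Ygen_rotate, Ygen_slide, Ygen_comm23]
    exact Ygen_s_s_mem_Ymon u (Set.mem_insert_of_mem _ ⟨j, rfl⟩)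
  · exact ⟨{i, j}, Finset.card_le_two.trans (by norm_num), Ymon_pair u hij⟩

theorem Ygen_mem_Ymon {a b c : G} (ha : a ∈ insert s (Set.range u))
    (hb : b ∈ insert s (Set.range u)) (hc : c ∈ insert s (Set.range u)) :
    Ygen s a b c ∈ Ymon s u '' {T | T.card ≤ 3} := by
  have hmem : ∀ l, u l ∈ insert s (Set.range u) := fun l => Set.mem_insert_of_mem _ ⟨l, rfl⟩
  rcases ha with rfl | ⟨i, rfl⟩
  · exact Ygen_s_mem_Ymon u hb hc
  rcases hb with rfl | ⟨j, rfl⟩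
  · rw [Ygen_comm12]
    exact Ygen_s_mem_Ymon u (hmem i) hc
  rcases hc with rfl | ⟨k, rfl⟩
  · rw [← Ygen_rotate]
    exact Ygen_s_mem_Ymon u (hmem i) (hmem j)
  by_cases hij : i = j
  · rw [hij, Ygen_slide]
    exact Ygen_s_mem_Ymon u (hmem j) (hmem k)
  by_cases hjk : j = k
  · rw [hjk, Ygen_rotate, Ygen_slide]
    exact Ygen_s_mem_Ymon u (hmem k) (hmem i)
  by_cases hik : i = k
  · rw [hik, Ygen_comm23, Ygen_slide]
    exact Ygen_s_mem_Ymon u (hmem k) (hmem j)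
  exact ⟨{i, j, k}, Finset.card_le_three, Ymon_triple u hij hik hjk⟩

theorem span_Ymon_eq_top (hu : Submodule.span (ZMod 2) (insert s (Set.range u)) = ⊤) :
    Submodule.span (ZMod 2) (Set.range fun T : {T : Finset I // T.card ≤ 3} => Ymon s u T.1)
      = ⊤ :=
  eq_top_of_Ygen_mem hu fun a ha b hb c hc => by
    obtain ⟨T, hT, hY⟩ := Ygen_mem_Ymon u ha hb hc
    exact Submodule.subset_span ⟨⟨T, hT⟩, hY⟩

end A1

section QuadraticRefinements

variable {g : ℕ}

theorem quad_apply_zero (q : Om g) : q.1 0 = 0 := by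
  simpa [bsym] using q.2 0 0

theorem ovh_zero : ovh g 0 = 0 :=
  funext quad_apply_zero

theorem ovh_add (a b : H2 g) : ovh g (a + b) = ovh g a + ovh g b + fun _ => bsym g a b :=
  funext fun q => q.2 a b

theorem ovh_smul (c : ZMod 2) (a : H2 g) : ovh g (c • a) = c • ovh g a := by
  obtain rfl | rfl := (by decide : ∀ c : ZMod 2, c = 0 ∨ c = 1) c
  · rw [zero_smul, zero_smul, ovh_zero]
  · rw [one_smul, one_smul]

/-- `q₀(a) = ∑ aₓᵢ a_yᵢ` refines the form, and adding `bsym c` to it moves the values on the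
basis vectors to any prescribed ones: `bsym c eₓᵢ = c_yᵢ`, `bsym c e_yᵢ = cₓᵢ`. -/
theorem exists_quad_apply_single (v : Fin g ⊕ Fin g → ZMod 2) :
    ∃ q : Om g, ∀ i, q.1 (Pi.single i 1) = v i := by
  refine ⟨⟨fun a => ∑ i, a (.inl i) * a (.inr i) + bsym g (v ∘ Sum.swap) a, fun a b => ?_⟩,
    fun i => ?_⟩
  · simp only [bsym, Pi.add_apply, ← Finset.sum_add_distrib]
    exact Finset.sum_congr rfl fun _ _ => by ring
  · rcases i with i | i <;> simp [bsym, Pi.single_apply]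

theorem ovh_mem_span (h : H2 g) :
    ovh g h ∈ Submodule.span (ZMod 2) (insert 1 (Set.range fun i => ovh g (Pi.single i 1))) := by
  set P := Submodule.span (ZMod 2) (insert 1 (Set.range fun i => ovh g (Pi.single i 1)))
  have hconst (x : ZMod 2) : (fun _ => x : Om g → ZMod 2) ∈ P := by
    simpa [Pi.smul_def] using P.smul_mem x (Submodule.subset_span (Set.mem_insert _ _))
  have hspan : h ∈ Submodule.span (ZMod 2) (Set.range fun i => (Pi.single i 1 : H2 g)) := by
    rw [← funext (Pi.basisFun_apply (ZMod 2) (Fin g ⊕ Fin g))]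
    exact (Pi.basisFun (ZMod 2) _).mem_span h
  induction hspan using Submodule.span_induction with
  | mem a ha =>
    obtain ⟨i, rfl⟩ := ha
    exact Submodule.subset_span (Set.mem_insert_of_mem _ ⟨i, rfl⟩)
  | zero => rw [ovh_zero]; exact P.zero_mem
  | add a b _ _ ha hb => rw [ovh_add]; exact P.add_mem (P.add_mem ha hb) (hconst _)
  | smul c a _ ha => rw [ovh_smul]; exact P.smul_mem c ha

theorem Bk_one_le_span :
    Bk g 1 ≤ Submodule.span (ZMod 2) (insert 1 (Set.range fun i => ovh g (Pi.single i 1))) := by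
  refine Submodule.span_le.2 ?_
  rintro _ ⟨l, hl, hA, rfl⟩
  match l, hl, hA with
  | [], _, _ => exact Submodule.subset_span (Set.mem_insert _ _)
  | [f], _, hA =>
    obtain ⟨h, ε, rfl⟩ := hA f (List.mem_singleton_self f)
    have : (fun q : Om g => q.1 h + ε) = ovh g h + ε • 1 := by
      funext q; simp [ovh]
    rw [List.prod_singleton, this]
    exact Submodule.add_mem _ (ovh_mem_span h)
      (Submodule.smul_mem _ _ (Submodule.subset_span (Set.mem_insert _ _)))

theorem Bk_mul_le (j k : ℕ) : Bk g j * Bk g k ≤ Bk g (j + k) := by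
  rw [Bk, Bk, Submodule.span_mul_span]
  refine Submodule.span_mono ?_
  rintro _ ⟨_, ⟨l, hl, hA, rfl⟩, _, ⟨l', hl', hA', rfl⟩, rfl⟩
  refine ⟨l ++ l', by simp; omega, fun x hx => ?_, List.prod_append.symm⟩
  rcases List.mem_append.1 hx with hx | hx
  exacts [hA x hx, hA' x hx]

end QuadraticRefinements

section Gamma

variable (g : ℕ)

theorem mem_Bk_one_of_mem_Aff {f : Om g → ZMod 2} (hf : f ∈ Aff g) : f ∈ Bk g 1 :=
  Submodule.subset_span ⟨[f], by simp, by simpa using hf, by simp⟩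

def ovhBasis (i : Fin g ⊕ Fin g) : Bk g 1 :=
  ⟨ovh g (Pi.single i 1), mem_Bk_one_of_mem_Aff g ⟨Pi.single i 1, 0, by funext q; simp [ovh]⟩⟩

theorem span_ovhBasis :
    Submodule.span (ZMod 2) (insert (ov1B g) (Set.range (ovhBasis g))) = ⊤ := by
  apply Submodule.map_injective_of_injective (Bk g 1).injective_subtype
  rw [Submodule.map_span, Submodule.map_top, Submodule.range_subtype, Set.image_insert_eq,
    ← Set.range_comp]
  refine le_antisymm (Submodule.span_le.2 ?_) Bk_one_le_span
  rintro _ (rfl | ⟨i, rfl⟩)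
  exacts [(ov1B g).2, (ovhBasis g i).2]

def tripleProd : A1 (Bk g 1) (ov1B g) →+ (Om g → ZMod 2) :=
  A1.lift (fun a b c => (a : Om g → ZMod 2) * b * c)
    (fun a b c => by ring)
    (fun a b c => by rw [ZModModule.neg_eq_self]; ring)
    (fun a a' b c => by rw [Submodule.coe_add]; ring)
    (fun z w => funext fun q =>
      show z.1 q * z.1 q * w.1 q = 1 * z.1 q * w.1 q by
        rw [(by decide : ∀ x : ZMod 2, x * x = 1 * x)])

theorem tripleProd_Ygen (a b c : Bk g 1) :
    tripleProd g (Ygen (ov1B g) a b c) = (a : Om g → ZMod 2) * b * c :=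
  A1.lift_Ygen _ _ _ _ _ a b c

theorem tripleProd_Ypad (l : List (Bk g 1)) (hl : l.length ≤ 3) :
    tripleProd g (A1.Ypad (ov1B g) l) = (l.map Subtype.val).prod := by
  obtain ⟨a, b, c, habc⟩ := List.length_eq_three.1
    (show (List.replicate (3 - l.length) (ov1B g) ++ l).length = 3 by simp; omega)
  calc tripleProd g (A1.Ypad (ov1B g) l)
      = ((List.replicate (3 - l.length) (ov1B g) ++ l).map Subtype.val).prod := by
        rw [A1.Ypad, habc, A1.Y3, tripleProd_Ygen]
        simp [mul_assoc]
    _ = (l.map Subtype.val).prod := by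
        simp [ov1B, ← Pi.one_def]

theorem tripleProd_mem_Bk (x : A1 (Bk g 1) (ov1B g)) : tripleProd g x ∈ Bk g 3 := by
  induction x using A1.induction_on with
  | zero => rw [map_zero]; exact zero_mem _
  | gen a b c =>
    rw [tripleProd_Ygen]
    exact Bk_mul_le 2 1 (Submodule.mul_mem_mul (Bk_mul_le 1 1 (Submodule.mul_mem_mul a.2 b.2)) c.2)
  | add x y hx hy => rw [map_add]; exact add_mem hx hy
  | neg x hx => rw [map_neg]; exact neg_mem hx

theorem Bk_le_range_tripleProd :
    Bk g 3 ≤ LinearMap.range ((tripleProd g).toZModLinearMap 2) := by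
  refine Submodule.span_le.2 ?_
  rintro _ ⟨l, hl, hA, rfl⟩
  lift l to List (Bk g 1) using fun f hf => mem_Bk_one_of_mem_Aff g (hA f hf)
  exact ⟨A1.Ypad (ov1B g) l, tripleProd_Ypad g l (by simpa using hl)⟩

theorem tripleProd_Ymon {T : Finset (Fin g ⊕ Fin g)} (hT : T.card ≤ 3) :
    tripleProd g (A1.Ymon (ov1B g) (ovhBasis g) T) = ∏ i ∈ T, ovh g (Pi.single i 1) := by
  rw [A1.Ymon, tripleProd_Ypad g _ (by simpa using hT), List.map_map]
  exact Finset.prod_map_toList T _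

theorem tripleProd_injective : Function.Injective (tripleProd g) := by
  refine LinearMap.injective_of_linearIndependent (f := (tripleProd g).toZModLinearMap 2)
    (A1.span_Ymon_eq_top (ovhBasis g) (span_ovhBasis g)) ?_
  have hmon := linearIndependent_prod_of_exists_indicator (fun i => ovh g (Pi.single i 1))
    fun S => exists_quad_apply_single fun i => if i ∈ S then 1 else 0
  have himage : (tripleProd g).toZModLinearMap 2 ∘
      (fun T : {T : Finset (Fin g ⊕ Fin g) // T.card ≤ 3} => A1.Ymon (ov1B g) (ovhBasis g) T.1)
      = (fun T => ∏ i ∈ T, ovh g (Pi.single i 1)) ∘ Subtype.val :=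
    funext fun T => tripleProd_Ymon g T.2
  rw [himage]
  exact hmon.comp Subtype.val Subtype.val_injective

def gamma : A1 (Bk g 1) (ov1B g) →+ Bk g 3 :=
  (tripleProd g).codRestrict (Bk g 3) (tripleProd_mem_Bk g)

theorem gamma_bijective : Function.Bijective (gamma g) := by
  refine ⟨fun x y h => tripleProd_injective g (congrArg Subtype.val h), fun y => ?_⟩
  obtain ⟨x, hx⟩ := Bk_le_range_tripleProd g y.2
  exact ⟨x, Subtype.ext hx⟩

end Gamma

/-- The map `γ : A_1(B_g^{(1)}, \overline{1}) → B_g^{(3)}` given by multiplying the three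
labels, `Y[z₁,z₂,z₃] ↦ z₁z₂z₃`, is a well-defined isomorphism of abelian groups. -/
theorem A1_B1_iso_B3 (g : ℕ) :
    ∃ e : A1 (Bk g 1) (ov1B g) ≃+ Bk g 3,
      ∀ z₁ z₂ z₃ : Bk g 1,
        ((e (Ygen (ov1B g) z₁ z₂ z₃) : Bk g 3) : Om g → ZMod 2)
          = (z₁ : Om g → ZMod 2) * (z₂ : Om g → ZMod 2) * (z₃ : Om g → ZMod 2) :=
  ⟨AddEquiv.ofBijective (gamma g) (gamma_bijective g), tripleProd_Ygen g⟩
end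

section
/- Let α = Σ_{i=1}^g \overline{x_i}·\overline{y_i} ∈ B_g^{(2)} be the Arf invariant Boolean polynomial. Two cubic Boolean polynomials f, f' ∈ B_g^{(3)} agree on all quadratic forms q ∈ Ω_g with α(q) = 0 if and only if f - f' is a multiple of α, i.e., f - f' ∈ α·B_g^{(1)}. -/
/-- The Arf invariant `α(q) = ∑ᵢ q(xᵢ)q(yᵢ)`, as a Boolean function on `Ω_g`. -/
def arfB (g : ℕ) : Om g → ZMod 2 :=
  fun q => ∑ i : Fin g,
    q.1 (Pi.single (Sum.inl i) 1) * q.1 (Pi.single (Sum.inr i) 1)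

namespace CubicArf

lemma z2 : ∀ x : ZMod 2, x = 0 ∨ x = 1 := by decide

variable {g : ℕ}

/-! ## Coordinate world -/

def dotW (h w : H2 g) : ZMod 2 := ∑ e, h e * w e

def AffW (g : ℕ) : Set (H2 g → ZMod 2) := {F | ∃ (h : H2 g) (ε : ZMod 2), F = fun w => dotW h w + ε}

def PkW (g k : ℕ) : Submodule (ZMod 2) (H2 g → ZMod 2) :=
  Submodule.span (ZMod 2)
    {F | ∃ l : List (H2 g → ZMod 2), l.length ≤ k ∧ (∀ x ∈ l, x ∈ AffW g) ∧ F = l.prod}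

def alS (s : Finset (Fin g)) : H2 g → ZMod 2 := fun w => ∑ i ∈ s, w (Sum.inl i) * w (Sum.inr i)

lemma dot_zero_right (h : H2 g) : dotW h 0 = 0 := by simp [dotW]

lemma dot_single_right (h : H2 g) (e : Fin g ⊕ Fin g) : dotW h (Pi.single e 1) = h e := by
  simp [dotW, Pi.single_apply]

lemma dot_single_left (w : H2 g) (e : Fin g ⊕ Fin g) : dotW (Pi.single e 1) w = w e := by
  simp [dotW, Pi.single_apply]

lemma dot_comm (h w : H2 g) : dotW h w = dotW w h := by
  unfold dotW; exact Finset.sum_congr rfl fun e _ => mul_comm _ _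

lemma dot_update_right (h w : H2 g) (e : Fin g ⊕ Fin g) (c : ZMod 2) :
    dotW h (Function.update w e c) = dotW (Function.update h e 0) w + h e * c := by
  unfold dotW
  have h1 : (fun e' => h e' * Function.update w e c e') =
      Function.update (fun e' => h e' * w e') e (h e * c) := by
    funext e'; by_cases he : e' = e <;> simp [Function.update_apply, he]
  have h2 : (fun e' => Function.update h e 0 e' * w e') =
      Function.update (fun e' => h e' * w e') e 0 := by
    funext e'; by_cases he : e' = e <;> simp [Function.update_apply, he]
  calc ∑ e', h e' * Function.update w e c e'
      = ∑ e', Function.update (fun e' => h e' * w e') e (h e * c) e' := by rw [h1]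
    _ = h e * c + ∑ e' ∈ Finset.univ \ {e}, h e' * w e' :=
        Finset.sum_update_of_mem (Finset.mem_univ e) _ _
    _ = (0 + ∑ e' ∈ Finset.univ \ {e}, h e' * w e') + h e * c := by ring
    _ = (∑ e', Function.update (fun e' => h e' * w e') e 0 e') + h e * c := by
        rw [Finset.sum_update_of_mem (Finset.mem_univ e)]
    _ = (∑ e', Function.update h e 0 e' * w e') + h e * c := by rw [h2]

/-! ### AffW closure -/

lemma aff_zero : (0 : H2 g → ZMod 2) ∈ AffW g :=
  ⟨0, 0, by funext w; simp [dotW]⟩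

lemma aff_const (c : ZMod 2) : (fun _ : H2 g => c) ∈ AffW g :=
  ⟨0, c, by funext w; simp [dotW]⟩

lemma aff_one : (1 : H2 g → ZMod 2) ∈ AffW g := aff_const 1

lemma aff_coord (e : Fin g ⊕ Fin g) : (fun w : H2 g => w e) ∈ AffW g :=
  ⟨Pi.single e 1, 0, by funext w; simp [dot_single_left]⟩

lemma aff_add {F G : H2 g → ZMod 2} (hF : F ∈ AffW g) (hG : G ∈ AffW g) : F + G ∈ AffW g := by
  obtain ⟨h, ε, rfl⟩ := hF; obtain ⟨h', ε', rfl⟩ := hG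
  refine ⟨h + h', ε + ε', ?_⟩
  funext w; simp only [Pi.add_apply]
  have : dotW (h + h') w = dotW h w + dotW h' w := by
    unfold dotW; rw [← Finset.sum_add_distrib]
    exact Finset.sum_congr rfl fun e _ => by simp [add_mul]
  rw [this]; ring

lemma aff_smul (c : ZMod 2) {F : H2 g → ZMod 2} (hF : F ∈ AffW g) : c • F ∈ AffW g := by
  rcases z2 c with rfl | rfl
  · simpa using aff_zero
  · simpa using hF

lemma aff_update {F : H2 g → ZMod 2} (hF : F ∈ AffW g) (e : Fin g ⊕ Fin g) (c : ZMod 2) :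
    (fun w => F (Function.update w e c)) ∈ AffW g := by
  obtain ⟨h, ε, rfl⟩ := hF
  refine ⟨Function.update h e 0, h e * c + ε, ?_⟩
  funext w
  show dotW h (Function.update w e c) + ε = _
  rw [dot_update_right]; ring

/-! ### PkW basics -/

lemma one_mem_gen (k : ℕ) : (1 : H2 g → ZMod 2) ∈
    {F | ∃ l : List (H2 g → ZMod 2), l.length ≤ k ∧ (∀ x ∈ l, x ∈ AffW g) ∧ F = l.prod} :=
  ⟨[], by simp⟩

lemma const_mem (c : ZMod 2) (k : ℕ) : (fun _ : H2 g => c) ∈ PkW g k := by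
  have : (fun _ : H2 g => c) = c • (1 : H2 g → ZMod 2) := by
    funext w; simp
  rw [this]
  exact Submodule.smul_mem _ _ (Submodule.subset_span (one_mem_gen k))

lemma aff_mem_Pk1 {F : H2 g → ZMod 2} (hF : F ∈ AffW g) : F ∈ PkW g 1 :=
  Submodule.subset_span ⟨[F], by simp, by simpa using hF, by simp⟩

lemma PkW_mono {k k' : ℕ} (h : k ≤ k') : PkW g k ≤ PkW g k' :=
  Submodule.span_mono fun F ⟨l, hl, ha, hp⟩ => ⟨l, hl.trans h, ha, hp⟩

lemma pk0_const {F : H2 g → ZMod 2} (hF : F ∈ PkW g 0) : ∃ c, F = fun _ => c := by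
  induction hF using Submodule.span_induction with
  | mem F h =>
    obtain ⟨l, hl, _, rfl⟩ := h
    have : l = [] := List.length_eq_zero_iff.mp (Nat.le_zero.mp hl)
    exact ⟨1, by subst this; funext w; simp⟩
  | zero => exact ⟨0, rfl⟩
  | add F G _ _ hF hG =>
    obtain ⟨c, rfl⟩ := hF; obtain ⟨d, rfl⟩ := hG; exact ⟨c + d, rfl⟩
  | smul c F _ hF => obtain ⟨d, rfl⟩ := hF; exact ⟨c * d, rfl⟩

lemma pk1_aff {F : H2 g → ZMod 2} (hF : F ∈ PkW g 1) : F ∈ AffW g := by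
  induction hF using Submodule.span_induction with
  | mem F h =>
    obtain ⟨l, hl, ha, rfl⟩ := h
    match l, hl with
    | [], _ => exact aff_one
    | [A], _ => simpa using ha A (by simp)
  | zero => exact aff_zero
  | add F G _ _ hF hG => exact aff_add hF hG
  | smul c F _ hF => exact aff_smul c hF

lemma prod_comp {X Y : Type*} (σ : Y → X) :
    ∀ l : List (X → ZMod 2), (fun y => l.prod (σ y)) = (l.map fun A => (fun y => A (σ y))).prod := by
  intro l
  induction l with
  | nil => funext y; simp
  | cons A l ih =>
    funext y
    simp only [List.prod_cons, List.map_cons, Pi.mul_apply]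
    rw [← ih]

lemma span_comp {X Y : Type*} (σ : Y → X) (S1 : Set (X → ZMod 2)) (S2 : Set (Y → ZMod 2))
    (hs : ∀ A ∈ S1, (fun y => A (σ y)) ∈ S2) {k : ℕ} {F : X → ZMod 2}
    (hF : F ∈ Submodule.span (ZMod 2)
      {f | ∃ l : List (X → ZMod 2), l.length ≤ k ∧ (∀ x ∈ l, x ∈ S1) ∧ f = l.prod}) :
    (fun y => F (σ y)) ∈ Submodule.span (ZMod 2)
      {f | ∃ l : List (Y → ZMod 2), l.length ≤ k ∧ (∀ x ∈ l, x ∈ S2) ∧ f = l.prod} := by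
  induction hF using Submodule.span_induction with
  | mem F h =>
    obtain ⟨l, hl, ha, rfl⟩ := h
    refine Submodule.subset_span ⟨l.map fun A => (fun y => A (σ y)), by simpa using hl,
      ?_, prod_comp σ l⟩
    intro x hx
    simp only [List.mem_map] at hx
    obtain ⟨A, hA, rfl⟩ := hx
    exact hs A (ha A hA)
  | zero => exact Submodule.zero_mem _
  | add F G _ _ hF hG =>
    have : (fun y => (F + G) (σ y)) = (fun y => F (σ y)) + fun y => G (σ y) := by
      funext y; simp
    rw [this]; exact Submodule.add_mem _ hF hG
  | smul c F _ hF =>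
    have : (fun y => (c • F) (σ y)) = c • fun y => F (σ y) := by funext y; simp
    rw [this]; exact Submodule.smul_mem _ _ hF

lemma subst_mem {k : ℕ} (e : Fin g ⊕ Fin g) (c : ZMod 2) {F : H2 g → ZMod 2}
    (hF : F ∈ PkW g k) : (fun w => F (Function.update w e c)) ∈ PkW g k :=
  span_comp _ (AffW g) (AffW g) (fun A hA => aff_update hA e c) hF

/-! ### Discrete derivative -/

def Dm (e : Fin g ⊕ Fin g) (F : H2 g → ZMod 2) : H2 g → ZMod 2 :=
  fun w => F (Function.update w e 1) + F (Function.update w e 0)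

lemma Dm_aff_const {A : H2 g → ZMod 2} (hA : A ∈ AffW g) (e : Fin g ⊕ Fin g) :
    ∃ c, Dm e A = fun _ => c := by
  obtain ⟨h, ε, rfl⟩ := hA
  refine ⟨h e, ?_⟩
  funext w
  simp only [Dm]
  rw [dot_update_right, dot_update_right]
  have : ∀ X he ε : ZMod 2, X + he * 1 + ε + (X + he * 0 + ε) = he := by decide
  exact this _ _ _

lemma aff_mul_mem {A : H2 g → ZMod 2} (hA : A ∈ AffW g) {m : ℕ} {G : H2 g → ZMod 2}
    (hG : G ∈ PkW g m) : A * G ∈ PkW g (m + 1) := by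
  induction hG using Submodule.span_induction with
  | mem G h =>
    obtain ⟨l, hl, ha, rfl⟩ := h
    refine Submodule.subset_span ⟨A :: l, by simpa using hl, ?_, by simp⟩
    intro x hx
    rcases List.mem_cons.mp hx with rfl | hx
    · exact hA
    · exact ha x hx
  | zero => simpa using Submodule.zero_mem _
  | add F G _ _ hF hG => rw [mul_add]; exact Submodule.add_mem _ hF hG
  | smul c F _ hF => rw [mul_smul_comm]; exact Submodule.smul_mem _ _ hF

lemma prod_mem_gen {l : List (H2 g → ZMod 2)} (ha : ∀ x ∈ l, x ∈ AffW g) :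
    l.prod ∈ PkW g l.length :=
  Submodule.subset_span ⟨l, le_rfl, ha, rfl⟩

lemma Dm_prod (e : Fin g ⊕ Fin g) :
    ∀ l : List (H2 g → ZMod 2), (∀ x ∈ l, x ∈ AffW g) → Dm e l.prod ∈ PkW g (l.length - 1) := by
  intro l
  induction l with
  | nil =>
    intro _
    have : Dm e (List.prod (α := H2 g → ZMod 2) []) = 0 := by
      funext w; simp [Dm]
      decide
    rw [this]; exact Submodule.zero_mem _
  | cons A l ih =>
    intro ha
    have hA : A ∈ AffW g := ha A (by simp)
    have hl : ∀ x ∈ l, x ∈ AffW g := fun x hx => ha x (List.mem_cons_of_mem _ hx)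
    match l, hl, ih with
    | [], _, _ =>
      obtain ⟨c, hc⟩ := Dm_aff_const hA e
      have : Dm e ([A].prod) = fun _ => c := by
        simpa using hc
      rw [this]
      simpa using const_mem c 0
    | B :: l', hl, ih =>
      obtain ⟨c, hc⟩ := Dm_aff_const hA e
      set P := (B :: l').prod with hP
      have key : Dm e ((A :: B :: l').prod) =
          (fun w => A (Function.update w e 1)) * Dm e P
            + c • (fun w => P (Function.update w e 0)) := by
        funext w
        simp only [List.prod_cons, Dm, Pi.add_apply, Pi.mul_apply, Pi.smul_apply, smul_eq_mul, hP]
        have hcw : c = A (Function.update w e 1) + A (Function.update w e 0) := by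
          have := congrFun hc w
          simp only [Dm] at this
          exact this.symm
        rw [hcw]
        have : ∀ a b a' d : ZMod 2, a * b + a' * d = a * (b + d) + (a + a') * d := by decide
        exact this _ _ _ _
      rw [key]
      have h1 : (fun w => A (Function.update w e 1)) * Dm e P ∈ PkW g ((B :: l').length - 1 + 1) :=
        aff_mul_mem (aff_update hA e 1) (ih hl)
      have h2 : (fun w => P (Function.update w e 0)) ∈ PkW g (B :: l').length :=
        subst_mem e 0 (prod_mem_gen hl)
      refine Submodule.add_mem _ (PkW_mono ?_ h1) (Submodule.smul_mem _ _ (PkW_mono ?_ h2)) <;>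
        simp <;> omega

lemma Dm_mem (e : Fin g ⊕ Fin g) {k : ℕ} {F : H2 g → ZMod 2} (hF : F ∈ PkW g (k + 1)) :
    Dm e F ∈ PkW g k := by
  induction hF using Submodule.span_induction with
  | mem F h =>
    obtain ⟨l, hl, ha, rfl⟩ := h
    exact PkW_mono (by omega) (Dm_prod e l ha)
  | zero =>
    have : Dm e (0 : H2 g → ZMod 2) = 0 := by funext w; simp [Dm]
    rw [this]; exact Submodule.zero_mem _
  | add F G _ _ hF hG =>
    have : Dm e (F + G) = Dm e F + Dm e G := by funext w; simp [Dm]; ring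
    rw [this]; exact Submodule.add_mem _ hF hG
  | smul c F _ hF =>
    have : Dm e (c • F) = c • Dm e F := by funext w; simp [Dm]; ring
    rw [this]; exact Submodule.smul_mem _ _ hF

/-! ### upd2 and alS -/

def upd2 (w : H2 g) (i : Fin g) (a b : ZMod 2) : H2 g :=
  Function.update (Function.update w (Sum.inl i) a) (Sum.inr i) b

lemma upd2_inl (w : H2 g) (i : Fin g) (a b : ZMod 2) : upd2 w i a b (Sum.inl i) = a := by
  simp [upd2, Function.update_apply]

lemma upd2_inr (w : H2 g) (i : Fin g) (a b : ZMod 2) : upd2 w i a b (Sum.inr i) = b := by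
  simp [upd2]

lemma upd2_ne (w : H2 g) (i : Fin g) (a b : ZMod 2) {e : Fin g ⊕ Fin g}
    (h1 : e ≠ Sum.inl i) (h2 : e ≠ Sum.inr i) : upd2 w i a b e = w e := by
  simp [upd2, Function.update_apply, h1, h2]

lemma upd2_upd2 (w : H2 g) (i : Fin g) (a b c d : ZMod 2) :
    upd2 (upd2 w i a b) i c d = upd2 w i c d := by
  funext e
  rcases eq_or_ne e (Sum.inl i) with rfl | h1
  · rw [upd2_inl, upd2_inl]
  rcases eq_or_ne e (Sum.inr i) with rfl | h2
  · rw [upd2_inr, upd2_inr]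
  · rw [upd2_ne _ _ _ _ h1 h2, upd2_ne _ _ _ _ h1 h2, upd2_ne _ _ _ _ h1 h2]

lemma upd2_self (w : H2 g) (i : Fin g) : upd2 w i (w (Sum.inl i)) (w (Sum.inr i)) = w := by
  unfold upd2
  rw [Function.update_eq_self]
  rw [Function.update_eq_self]

lemma alS_upd2 {s : Finset (Fin g)} {i : Fin g} (hi : i ∉ s) (w : H2 g) (a b : ZMod 2) :
    alS s (upd2 w i a b) = alS s w := by
  unfold alS
  refine Finset.sum_congr rfl fun j hj => ?_
  have hji : j ≠ i := fun h => hi (h ▸ hj)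
  rw [upd2_ne _ _ _ _ (by simp [hji]) (by simp), upd2_ne _ _ _ _ (by simp) (by simp [hji])]

lemma alS_insert {s : Finset (Fin g)} {i : Fin g} (hi : i ∉ s) (w : H2 g) :
    alS (insert i s) w = w (Sum.inl i) * w (Sum.inr i) + alS s w :=
  Finset.sum_insert hi

lemma alS_zero (s : Finset (Fin g)) : alS s (0 : H2 g) = 0 := by simp [alS]

lemma alS_single (s : Finset (Fin g)) (e : Fin g ⊕ Fin g) :
    alS s (Pi.single e 1) = 0 := by
  rcases e with j | j <;> simp [alS, Pi.single_apply]

/-! ### Decomposition -/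

lemma DEC (F : H2 g → ZMod 2) (i : Fin g) (w : H2 g) :
    F w = F (upd2 w i 0 0)
      + w (Sum.inl i) * (F (upd2 w i 1 0) + F (upd2 w i 0 0))
      + w (Sum.inr i) * (F (upd2 w i 0 1) + F (upd2 w i 0 0))
      + w (Sum.inl i) * w (Sum.inr i) *
          (F (upd2 w i 1 1) + F (upd2 w i 1 0) + F (upd2 w i 0 1) + F (upd2 w i 0 0)) := by
  have h00 : ∀ p q r s : ZMod 2, p = p + 0 * (q + p) + 0 * (r + p) + 0 * 0 * (s + q + r + p) := by
    decide
  have h10 : ∀ p q r s : ZMod 2, q = p + 1 * (q + p) + 0 * (r + p) + 1 * 0 * (s + q + r + p) := by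
    decide
  have h01 : ∀ p q r s : ZMod 2, r = p + 0 * (q + p) + 1 * (r + p) + 0 * 1 * (s + q + r + p) := by
    decide
  have h11 : ∀ p q r s : ZMod 2, s = p + 1 * (q + p) + 1 * (r + p) + 1 * 1 * (s + q + r + p) := by
    decide
  rcases z2 (w (Sum.inl i)) with hu | hu <;> rcases z2 (w (Sum.inr i)) with hv | hv
  · have hw := upd2_self w i
    rw [hu, hv] at hw
    rw [hu, hv, hw]
    exact h00 _ _ _ _
  · have hw := upd2_self w i
    rw [hu, hv] at hw
    rw [hu, hv, hw]
    exact h01 _ _ _ _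
  · have hw := upd2_self w i
    rw [hu, hv] at hw
    rw [hu, hv, hw]
    exact h10 _ _ _ _
  · have hw := upd2_self w i
    rw [hu, hv] at hw
    rw [hu, hv, hw]
    exact h11 _ _ _ _


/-! ### The core results -/

lemma T1 (s : Finset (Fin g)) {F : H2 g → ZMod 2} (hF : F ∈ PkW g 1)
    (hv : ∀ w, alS s w = 0 → F w = 0) : ∀ w, F w = 0 := by
  obtain ⟨h, ε, rfl⟩ := pk1_aff hF
  have h0 : ε = 0 := by
    have := hv 0 (alS_zero s)
    simpa [dot_zero_right] using this
  have he : ∀ e, h e = 0 := by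
    intro e
    have := hv (Pi.single e 1) (alS_single s e)
    simp only [dot_single_right, h0, add_zero] at this
    exact this
  intro w
  simp [dotW, he, h0]

lemma T2 (s : Finset (Fin g)) : ∀ F ∈ PkW g 2, (∀ w, alS s w = 0 → F w = 0) →
    ∃ c : ZMod 2, ∀ w, F w = c * alS s w := by
  induction s using Finset.induction_on with
  | empty =>
    intro F _ hv
    exact ⟨0, fun w => by rw [hv w (by simp [alS]), zero_mul]⟩
  | @insert i s' hi IH =>
    intro F hF hv
    have hDmem : (fun w => F (upd2 w i 0 0)) ∈ PkW g 2 :=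
      subst_mem (Sum.inl i) 0 (subst_mem (Sum.inr i) 0 hF)
    have hBmem : (fun w => F (upd2 w i 1 0) + F (upd2 w i 0 0)) ∈ PkW g 1 :=
      Dm_mem (Sum.inl i) (subst_mem (Sum.inr i) 0 hF)
    have hCmem : (fun w => F (upd2 w i 0 1) + F (upd2 w i 0 0)) ∈ PkW g 1 := by
      have hCeq : (fun w => F (upd2 w i 0 1) + F (upd2 w i 0 0)) =
          Dm (Sum.inr i) (fun x => F (Function.update x (Sum.inl i) 0)) := by
        funext w
        simp only [Dm, upd2]
        rw [Function.update_comm (show (Sum.inr i : Fin g ⊕ Fin g) ≠ Sum.inl i by simp) 1 0,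
          Function.update_comm (show (Sum.inr i : Fin g ⊕ Fin g) ≠ Sum.inl i by simp) 0 0]
      rw [hCeq]
      exact Dm_mem _ (subst_mem (Sum.inl i) 0 hF)
    have hAmem : (fun w => F (upd2 w i 1 1) + F (upd2 w i 1 0) + F (upd2 w i 0 1)
        + F (upd2 w i 0 0)) ∈ PkW g 0 := by
      have hAeq : (fun w => F (upd2 w i 1 1) + F (upd2 w i 1 0) + F (upd2 w i 0 1)
          + F (upd2 w i 0 0)) = Dm (Sum.inl i) (Dm (Sum.inr i) F) := by
        funext w
        simp only [Dm, upd2]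
        ring
      rw [hAeq]
      exact Dm_mem _ (Dm_mem _ hF)
    have hDv : ∀ w, alS s' w = 0 → F (upd2 w i 0 0) = 0 := by
      intro w h
      refine hv _ ?_
      rw [alS_insert hi, upd2_inl, upd2_inr, alS_upd2 hi, h]
      ring
    have hBv : ∀ w, alS s' w = 0 → (fun w => F (upd2 w i 1 0) + F (upd2 w i 0 0)) w = 0 := by
      intro w h
      have h1 : F (upd2 w i 1 0) = 0 := by
        refine hv _ ?_
        rw [alS_insert hi, upd2_inl, upd2_inr, alS_upd2 hi, h]
        ring
      simp only [h1, hDv w h, add_zero]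
    have hCv : ∀ w, alS s' w = 0 → (fun w => F (upd2 w i 0 1) + F (upd2 w i 0 0)) w = 0 := by
      intro w h
      have h1 : F (upd2 w i 0 1) = 0 := by
        refine hv _ ?_
        rw [alS_insert hi, upd2_inl, upd2_inr, alS_upd2 hi, h]
        ring
      simp only [h1, hDv w h, add_zero]
    have hB0 := T1 s' hBmem hBv
    have hC0 := T1 s' hCmem hCv
    obtain ⟨d, hd⟩ := IH _ hDmem hDv
    obtain ⟨a, ha⟩ := pk0_const hAmem
    refine ⟨a, fun w => ?_⟩
    rw [DEC F i w, alS_insert hi]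
    rw [show F (upd2 w i 1 0) + F (upd2 w i 0 0) = 0 from hB0 w]
    rw [show F (upd2 w i 0 1) + F (upd2 w i 0 0) = 0 from hC0 w]
    rw [show F (upd2 w i 1 1) + F (upd2 w i 1 0) + F (upd2 w i 0 1) + F (upd2 w i 0 0) = a from
      congrFun ha w]
    rw [show F (upd2 w i 0 0) = d * alS s' w from hd w]
    rcases z2 (alS s' w) with h | h
    · rw [h]; ring
    · have h0 : F (upd2 w i 1 1) = 0 := by
        refine hv _ ?_
        rw [alS_insert hi, upd2_inl, upd2_inr, alS_upd2 hi, h]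
        decide
      have hDEC2 := DEC F i (upd2 w i 1 1)
      simp only [upd2_upd2, upd2_inl, upd2_inr] at hDEC2
      rw [show F (upd2 w i 1 0) + F (upd2 w i 0 0) = 0 from hB0 w] at hDEC2
      rw [show F (upd2 w i 0 1) + F (upd2 w i 0 0) = 0 from hC0 w] at hDEC2
      rw [show F (upd2 w i 1 1) + F (upd2 w i 1 0) + F (upd2 w i 0 1) + F (upd2 w i 0 0) = a from
        congrFun ha w] at hDEC2
      rw [show F (upd2 w i 0 0) = d * alS s' w from hd w, h0, h] at hDEC2
      have himp : ∀ d a : ZMod 2, (0 : ZMod 2) = d * 1 + 1 * 0 + 1 * 0 + 1 * 1 * a → d = a := by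
        decide
      rw [h, himp d a hDEC2]
      ring

lemma T3 (s : Finset (Fin g)) : ∀ F ∈ PkW g 3, (∀ w, alS s w = 0 → F w = 0) →
    ∃ U ∈ PkW g 1, ∀ w, F w = alS s w * U w := by
  induction s using Finset.induction_on with
  | empty =>
    intro F _ hv
    exact ⟨0, Submodule.zero_mem _, fun w => by
      rw [hv w (by simp [alS])]; simp [alS]⟩
  | @insert i s' hi IH =>
    intro F hF hv
    have hDmem : (fun w => F (upd2 w i 0 0)) ∈ PkW g 3 :=
      subst_mem (Sum.inl i) 0 (subst_mem (Sum.inr i) 0 hF)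
    have hBmem : (fun w => F (upd2 w i 1 0) + F (upd2 w i 0 0)) ∈ PkW g 2 :=
      Dm_mem (Sum.inl i) (subst_mem (Sum.inr i) 0 hF)
    have hCmem : (fun w => F (upd2 w i 0 1) + F (upd2 w i 0 0)) ∈ PkW g 2 := by
      have hCeq : (fun w => F (upd2 w i 0 1) + F (upd2 w i 0 0)) =
          Dm (Sum.inr i) (fun x => F (Function.update x (Sum.inl i) 0)) := by
        funext w
        simp only [Dm, upd2]
        rw [Function.update_comm (show (Sum.inr i : Fin g ⊕ Fin g) ≠ Sum.inl i by simp) 1 0,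
          Function.update_comm (show (Sum.inr i : Fin g ⊕ Fin g) ≠ Sum.inl i by simp) 0 0]
      rw [hCeq]
      exact Dm_mem _ (subst_mem (Sum.inl i) 0 hF)
    have hAmem : (fun w => F (upd2 w i 1 1) + F (upd2 w i 1 0) + F (upd2 w i 0 1)
        + F (upd2 w i 0 0)) ∈ PkW g 1 := by
      have hAeq : (fun w => F (upd2 w i 1 1) + F (upd2 w i 1 0) + F (upd2 w i 0 1)
          + F (upd2 w i 0 0)) = Dm (Sum.inl i) (Dm (Sum.inr i) F) := by
        funext w
        simp only [Dm, upd2]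
        ring
      rw [hAeq]
      exact Dm_mem _ (Dm_mem _ hF)
    have hDv : ∀ w, alS s' w = 0 → (fun w => F (upd2 w i 0 0)) w = 0 := by
      intro w h
      refine hv _ ?_
      rw [alS_insert hi, upd2_inl, upd2_inr, alS_upd2 hi, h]
      ring
    have hBv : ∀ w, alS s' w = 0 → (fun w => F (upd2 w i 1 0) + F (upd2 w i 0 0)) w = 0 := by
      intro w h
      have h1 : F (upd2 w i 1 0) = 0 := by
        refine hv _ ?_
        rw [alS_insert hi, upd2_inl, upd2_inr, alS_upd2 hi, h]
        ring
      simp only [h1, hDv w h, add_zero]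
    have hCv : ∀ w, alS s' w = 0 → (fun w => F (upd2 w i 0 1) + F (upd2 w i 0 0)) w = 0 := by
      intro w h
      have h1 : F (upd2 w i 0 1) = 0 := by
        refine hv _ ?_
        rw [alS_insert hi, upd2_inl, upd2_inr, alS_upd2 hi, h]
        ring
      simp only [h1, hDv w h, add_zero]
    obtain ⟨b, hb⟩ := T2 s' _ hBmem hBv
    obtain ⟨c, hc⟩ := T2 s' _ hCmem hCv
    obtain ⟨L, hLmem, hL⟩ := IH _ hDmem hDv
    set Afun : H2 g → ZMod 2 := fun w => F (upd2 w i 1 1) + F (upd2 w i 1 0) + F (upd2 w i 0 1)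
        + F (upd2 w i 0 0) with hAfun
    set N : H2 g → ZMod 2 := Afun + L + (fun _ => b + c) with hNdef
    have hNmem : N ∈ PkW g 1 :=
      Submodule.add_mem _ (Submodule.add_mem _ hAmem hLmem) (const_mem _ _)
    have hNv : ∀ w, alS s' w = 1 → N w = 0 := by
      intro w h
      have h0 : F (upd2 w i 1 1) = 0 := by
        refine hv _ ?_
        rw [alS_insert hi, upd2_inl, upd2_inr, alS_upd2 hi, h]
        decide
      have hDEC2 := DEC F i (upd2 w i 1 1)
      simp only [upd2_upd2, upd2_inl, upd2_inr] at hDEC2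
      have himp : ∀ p q r t Lw b c α : ZMod 2, α = 1 →
          (t = p + 1 * (q + p) + 1 * (r + p) + 1 * 1 * (t + q + r + p)) → t = 0 →
          (q + p = b * α) → (r + p = c * α) → (p = α * Lw) →
          t + q + r + p + Lw + (b + c) = 0 := by
        set_option synthInstance.maxSize 1000 in
        set_option maxRecDepth 8000 in
        decide
      exact himp (F (upd2 w i 0 0)) (F (upd2 w i 1 0)) (F (upd2 w i 0 1)) (F (upd2 w i 1 1))
        (L w) b c (alS s' w) h hDEC2 h0 (hb w) (hc w) (hL w)
    refine ⟨L + b • (fun w => w (Sum.inl i)) + c • (fun w => w (Sum.inr i)) + N,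
      Submodule.add_mem _ (Submodule.add_mem _ (Submodule.add_mem _ hLmem
        (Submodule.smul_mem _ _ (aff_mem_Pk1 (aff_coord _))))
        (Submodule.smul_mem _ _ (aff_mem_Pk1 (aff_coord _)))) hNmem, fun w => ?_⟩
    have hαN : alS s' w * N w = 0 := by
      rcases z2 (alS s' w) with h | h
      · rw [h, zero_mul]
      · rw [h, hNv w h, mul_zero]
    rw [DEC F i w, alS_insert hi]
    have hfin : ∀ p q r t Lw b c Nw α u v : ZMod 2,
        (q + p = b * α) → (r + p = c * α) → (p = α * Lw) → (α * Nw = 0) →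
        (Nw = t + q + r + p + Lw + (b + c)) →
        p + u * (q + p) + v * (r + p) + u * v * (t + q + r + p) =
          (u * v + α) * (Lw + b * u + c * v + Nw) := by
      set_option synthInstance.maxSize 2000 in
      set_option maxRecDepth 20000 in
      decide
    exact hfin (F (upd2 w i 0 0)) (F (upd2 w i 1 0)) (F (upd2 w i 0 1)) (F (upd2 w i 1 1))
      (L w) b c (N w) (alS s' w) (w (Sum.inl i)) (w (Sum.inr i))
      (hb w) (hc w) (hL w) hαN rfl


/-! ### Glue: parametrizing quadratic refinements by coordinates -/

def Qf (w : H2 g) : H2 g → ZMod 2 := fun a => alS Finset.univ a + dotW w a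

lemma isQuad_Qf (w : H2 g) : IsQuad g (Qf w) := by
  intro a b
  unfold Qf
  have h1 : alS Finset.univ (a + b) = alS Finset.univ a + alS Finset.univ b + bsym g a b := by
    unfold alS bsym
    rw [← Finset.sum_add_distrib, ← Finset.sum_add_distrib]
    refine Finset.sum_congr rfl fun i _ => ?_
    simp only [Pi.add_apply]
    ring
  have h2 : dotW w (a + b) = dotW w a + dotW w b := by
    unfold dotW
    rw [← Finset.sum_add_distrib]
    refine Finset.sum_congr rfl fun e _ => ?_
    simp only [Pi.add_apply]
    ring
  rw [h1, h2]
  ring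

def Q (w : H2 g) : Om g := ⟨Qf w, isQuad_Qf w⟩

lemma Qf_single (w : H2 g) (e : Fin g ⊕ Fin g) : Qf w (Pi.single e 1) = w e := by
  unfold Qf
  rw [alS_single, dot_single_right, zero_add]

lemma add_vanish {r : H2 g → ZMod 2} (radd : ∀ a b, r (a + b) = r a + r b)
    (rsingle : ∀ e, r (Pi.single e 1) = 0) : ∀ a, r a = 0 := by
  have r0 : r 0 = 0 := by
    have h := radd 0 0
    rw [add_zero] at h
    exact (left_eq_add.mp h)
  have claim : ∀ s : Finset (Fin g ⊕ Fin g), ∀ a : H2 g, (∀ e, e ∉ s → a e = 0) → r a = 0 := by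
    intro s
    induction s using Finset.induction_on with
    | empty =>
      intro a ha
      have : a = 0 := funext fun e => ha e (by simp)
      rw [this]; exact r0
    | @insert e₀ s' he IH =>
      intro a ha
      by_cases h0 : a e₀ = 0
      · refine IH a fun e he' => ?_
        by_cases h : e = e₀
        · rw [h]; exact h0
        · exact ha e (by simp [h, he'])
      · have h1 : a e₀ = 1 := (z2 _).resolve_left h0
        have hsplit : a = Function.update a e₀ 0 + Pi.single e₀ 1 := by
          funext e
          by_cases h : e = e₀
          · subst h; simp [h1]
          · simp [Function.update_apply, Pi.single_apply, h]
        rw [hsplit, radd, rsingle, add_zero]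
        refine IH _ fun e he' => ?_
        by_cases h : e = e₀
        · subst h; simp
        · rw [Function.update_apply, if_neg h]
          exact ha e (by simp [h, he'])
  exact fun a => claim Finset.univ a fun e he => absurd (Finset.mem_univ e) he

lemma Q_surj : Function.Surjective (Q : H2 g → Om g) := by
  intro q
  refine ⟨fun e => q.1 (Pi.single e 1), Subtype.ext ?_⟩
  set w : H2 g := fun e => q.1 (Pi.single e 1) with hw
  set r : H2 g → ZMod 2 := fun a => Qf w a + q.1 a with hr
  have radd : ∀ a b, r (a + b) = r a + r b := by
    intro a b
    have h1 := isQuad_Qf w a b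
    have h2 := q.2 a b
    simp only [hr]
    rw [h1, h2]
    have : ∀ x y u v s : ZMod 2, x + y + s + (u + v + s) = x + u + (y + v) := by decide
    exact this _ _ _ _ _
  have rsingle : ∀ e, r (Pi.single e 1) = 0 := by
    intro e
    simp only [hr]
    rw [Qf_single]
    have : ∀ x : ZMod 2, x + x = 0 := by decide
    exact this _
  have hz := add_vanish radd rsingle
  funext a
  have := hz a
  simp only [hr] at this
  have himp : ∀ x y : ZMod 2, x + y = 0 → x = y := by decide
  exact himp _ _ this

lemma comp_Q_mem {k : ℕ} {f : Om g → ZMod 2} (hf : f ∈ Bk g k) :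
    (fun w => f (Q w)) ∈ PkW g k := by
  refine span_comp Q (Aff g) (AffW g) ?_ hf
  rintro A ⟨h, ε, rfl⟩
  refine ⟨h, alS Finset.univ h + ε, ?_⟩
  funext w
  show Qf w h + ε = dotW h w + (alS Finset.univ h + ε)
  unfold Qf
  rw [dot_comm]
  ring

lemma arf_Q (w : H2 g) : arfB g (Q w) = alS Finset.univ w := by
  unfold arfB alS
  refine Finset.sum_congr rfl fun i _ => ?_
  show Qf w (Pi.single (Sum.inl i) 1) * Qf w (Pi.single (Sum.inr i) 1) = _
  rw [Qf_single, Qf_single]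

end CubicArf

/-- Two cubic Boolean polynomials `f, f' ∈ B_g^{(3)}` agree on all quadratic forms with
trivial Arf invariant if and only if `f - f' ∈ α·B_g^{(1)}`. -/
theorem cubic_agree_on_arf_zero_iff (g : ℕ) (f f' : Om g → ZMod 2)
    (hf : f ∈ Bk g 3) (hf' : f' ∈ Bk g 3) :
    (∀ q : Om g, arfB g q = 0 → f q = f' q) ↔
    (∃ u ∈ Bk g 1, f - f' = arfB g * u) := by
  constructor
  · intro hagree
    have hFmem : (fun w => (f - f') (CubicArf.Q w)) ∈ CubicArf.PkW g 3 :=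
      CubicArf.comp_Q_mem (Submodule.sub_mem _ hf hf')
    have hvan : ∀ w, CubicArf.alS Finset.univ w = 0 → (fun w => (f - f') (CubicArf.Q w)) w = 0 := by
      intro w h
      have harf : arfB g (CubicArf.Q w) = 0 := by rw [CubicArf.arf_Q]; exact h
      have := hagree (CubicArf.Q w) harf
      simp only [Pi.sub_apply, this, sub_self]
    obtain ⟨U, hU, hFU⟩ := CubicArf.T3 Finset.univ _ hFmem hvan
    obtain ⟨h, ε, rfl⟩ := CubicArf.pk1_aff hU
    refine ⟨fun q => q.1 h + (ε + CubicArf.alS Finset.univ h), ?_, ?_⟩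
    · exact Submodule.subset_span ⟨[fun q => q.1 h + (ε + CubicArf.alS Finset.univ h)],
        by simp, by
          intro x hx
          rw [List.mem_singleton] at hx
          subst hx
          exact ⟨h, ε + CubicArf.alS Finset.univ h, rfl⟩, by simp⟩
    · funext q
      obtain ⟨w, rfl⟩ := CubicArf.Q_surj q
      have h1 := hFU w
      rw [Pi.mul_apply, CubicArf.arf_Q]
      rw [h1]
      congr 1
      show CubicArf.dotW h w + ε = CubicArf.Qf w h + (ε + CubicArf.alS Finset.univ h)
      unfold CubicArf.Qf
      rw [CubicArf.dot_comm w h]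
      have : ∀ x y z : ZMod 2, x + y = z + x + (y + z) := by decide
      exact this _ _ _
  · rintro ⟨u, hu, hEq⟩ q hq
    have := congrFun hEq q
    rw [Pi.sub_apply, Pi.mul_apply, hq, zero_mul] at this
    exact sub_eq_zero.mp this
end

section
/- Let π be the free group F(x_1,...,x_g,y_1,...,y_g), H = π/π_2 ≅ Z^{2g}, and ∂ = Π_{i=1}^g [x_i, y_i] ∈ π_2. Suppose f̃ is an endomorphism of π with f̃(x_i) = x_i X_i and f̃(y_i) = y_i Y_i for some X_i, Y_i ∈ π_2, and f̃(∂) ≡ ∂ mod π_4. Then Σ_{i=1}^g (x_i ⊗ Y_i - y_i ⊗ X_i) ∈ H ⊗ (π_2/π_3) maps to zero under the bracketing map H ⊗ (π_2/π_3) → π_3/π_4 induced by commutation; equivalently, Π_i [X_i, y_i][x_i, Y_i] ≡ 1 mod π_4. -/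
/-- The free group `π = F(x₁,…,x_g,y₁,…,y_g)`, with `Sum.inl i = xᵢ`, `Sum.inr i = yᵢ`. -/
abbrev FG (g : ℕ) := FreeGroup (Fin g ⊕ Fin g)

/-- The generator `xᵢ`. -/
def xF (g : ℕ) (i : Fin g) : FG g := FreeGroup.of (Sum.inl i)

/-- The generator `yᵢ`. -/
def yF (g : ℕ) (i : Fin g) : FG g := FreeGroup.of (Sum.inr i)

open scoped commutatorElement

/-- The boundary element `∂ = ∏ᵢ [xᵢ, yᵢ]`. -/
def bdryF (g : ℕ) : FG g := (List.ofFn fun i : Fin g => ⁅xF g i, yF g i⁆).prod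

/-- `⁅π₂, π₂⁆ ≤ π₄`, via the three subgroups lemma in the quotient `π/π₄`. -/
lemma aux_comm_comm_le (G : Type*) [Group G] :
    ⁅(⊤ : Subgroup G).lowerCentralSeries 1, (⊤ : Subgroup G).lowerCentralSeries 1⁆ ≤ (⊤ : Subgroup G).lowerCentralSeries 3 := by
  set N := (⊤ : Subgroup G).lowerCentralSeries 3 with hN
  let φ : G →* G ⧸ N := QuotientGroup.mk' N
  have hsurj : Function.Surjective φ := QuotientGroup.mk'_surjective N
  have hmaptop : Subgroup.map φ ⊤ = ⊤ := Subgroup.map_top_of_surjective φ hsurj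
  have hbot : Subgroup.map φ N = ⊥ := by
    rw [Subgroup.map_eq_bot_iff, QuotientGroup.ker_mk']
  have h1 : ⁅⁅Subgroup.map φ ((⊤ : Subgroup G).lowerCentralSeries 1), (⊤ : Subgroup (G ⧸ N))⁆,
      (⊤ : Subgroup (G ⧸ N))⁆ = ⊥ := by
    rw [← hmaptop, ← Subgroup.map_commutator, ← Subgroup.map_commutator]
    exact hbot
  have h1' : ⁅⁅(⊤ : Subgroup (G ⧸ N)), Subgroup.map φ ((⊤ : Subgroup G).lowerCentralSeries 1)⁆,
      (⊤ : Subgroup (G ⧸ N))⁆ = ⊥ := by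
    rw [Subgroup.commutator_comm (⊤ : Subgroup (G ⧸ N))]
    exact h1
  have key : ⁅⁅(⊤ : Subgroup (G ⧸ N)), (⊤ : Subgroup (G ⧸ N))⁆,
      Subgroup.map φ ((⊤ : Subgroup G).lowerCentralSeries 1)⁆ = ⊥ :=
    Subgroup.commutator_commutator_eq_bot_of_rotate h1' h1
  have hD : Subgroup.map φ ((⊤ : Subgroup G).lowerCentralSeries 1) ≤
      ⁅(⊤ : Subgroup (G ⧸ N)), (⊤ : Subgroup (G ⧸ N))⁆ := by
    rw [← hmaptop, ← Subgroup.map_commutator]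
    exact Subgroup.map_mono (by exact le_rfl)
  rw [Subgroup.commutator_le]
  intro a ha b hb
  have hmem : ⁅φ a, φ b⁆ ∈ (⊥ : Subgroup (G ⧸ N)) := by
    rw [← key]
    exact Subgroup.commutator_mem_commutator (hD (Subgroup.mem_map_of_mem φ ha))
      (Subgroup.mem_map_of_mem φ hb)
  rw [Subgroup.mem_bot, ← map_commutatorElement] at hmem
  exact (QuotientGroup.eq_one_iff _).mp hmem

/-- Expansion of a commutator of products modulo central error terms. -/
lemma aux_expand {G : Type*} [Group G] (u a v b c₁ c₂ : G)
    (h1 : a * v = c₁ * (v * a))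
    (hab : Commute a b)
    (h3' : u * b = c₂ * (b * u))
    (hc₁ : ∀ z, Commute c₁ z) (hc₂ : ∀ z, Commute c₂ z) :
    ⁅u * a, v * b⁆ = ⁅u, v⁆ * (c₁ * c₂) := by
  have move₁ : ∀ z w : G, z * (c₁ * w) = c₁ * (z * w) := fun z w => by
    rw [← mul_assoc, ← (hc₁ z).eq, mul_assoc]
  have move₂ : ∀ z w : G, z * (c₂ * w) = c₂ * (z * w) := fun z w => by
    rw [← mul_assoc, ← (hc₂ z).eq, mul_assoc]
  have h2 : b * a⁻¹ = a⁻¹ * b := hab.symm.inv_right.eq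
  have h3 : b * u⁻¹ = c₂ * (u⁻¹ * b) := by
    calc b * u⁻¹ = u⁻¹ * (u * b) * u⁻¹ := by group
      _ = u⁻¹ * (c₂ * (b * u)) * u⁻¹ := by rw [h3']
      _ = c₂ * (u⁻¹ * (b * u)) * u⁻¹ := by rw [move₂]
      _ = c₂ * (u⁻¹ * b) := by group
  calc ⁅u * a, v * b⁆
      = u * (a * v) * (b * a⁻¹) * u⁻¹ * b⁻¹ * v⁻¹ := by group
    _ = u * (c₁ * (v * a)) * (b * a⁻¹) * u⁻¹ * b⁻¹ * v⁻¹ := by rw [h1]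
    _ = u * (c₁ * (v * a)) * (a⁻¹ * b) * u⁻¹ * b⁻¹ * v⁻¹ := by rw [h2]
    _ = c₁ * (u * (v * a)) * (a⁻¹ * b) * u⁻¹ * b⁻¹ * v⁻¹ := by rw [move₁]
    _ = c₁ * (u * v * (b * u⁻¹) * b⁻¹ * v⁻¹) := by group
    _ = c₁ * (u * v * (c₂ * (u⁻¹ * b)) * b⁻¹ * v⁻¹) := by rw [h3]
    _ = c₁ * ((u * v) * (c₂ * ((u⁻¹ * b) * (b⁻¹ * v⁻¹)))) := by group
    _ = c₁ * (c₂ * ((u * v) * ((u⁻¹ * b) * (b⁻¹ * v⁻¹)))) := by rw [move₂]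
    _ = c₁ * c₂ * ⁅u, v⁆ := by group
    _ = ⁅u, v⁆ * (c₁ * c₂) := ((hc₁ _).mul_left (hc₂ _)).eq

/-- Pulling central factors out of a product. -/
lemma aux_prod_central {G : Type*} [Group G] : ∀ {n : ℕ} (d c : Fin n → G),
    (∀ i, ∀ z, Commute (c i) z) →
    (List.ofFn fun i => d i * c i).prod = (List.ofFn d).prod * (List.ofFn c).prod := by
  intro n
  induction n with
  | zero => intro d c _; simp
  | succ m ih =>
    intro d c hc
    rw [List.ofFn_succ, List.ofFn_succ (f := d), List.ofFn_succ (f := c),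
      List.prod_cons, List.prod_cons, List.prod_cons,
      ih (fun i => d i.succ) (fun i => c i.succ) (fun i => hc i.succ)]
    set rd := (List.ofFn fun i : Fin m => d i.succ).prod
    set rc := (List.ofFn fun i : Fin m => c i.succ).prod
    calc d 0 * c 0 * (rd * rc) = d 0 * ((c 0 * rd) * rc) := by group
      _ = d 0 * ((rd * c 0) * rc) := by rw [(hc 0 rd).eq]
      _ = d 0 * rd * (c 0 * rc) := by group

/-- Let `f̃` be an endomorphism of the free group `π` with `f̃(xᵢ) = xᵢXᵢ`, `f̃(yᵢ) = yᵢYᵢ`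
for some `Xᵢ, Yᵢ ∈ π₂`, and suppose `f̃(∂) ≡ ∂ mod π₄`.  Then
`∏ᵢ [Xᵢ, yᵢ][xᵢ, Yᵢ] ≡ 1 mod π₄` (equivalently, `∑ᵢ (xᵢ ⊗ Yᵢ - yᵢ ⊗ Xᵢ)` is killed by the
bracketing map `H ⊗ π₂/π₃ → π₃/π₄`).  Here `π_k = lowerCentralSeries π (k-1)`. -/
theorem boundary_fixed_implies_bracket_zero (g : ℕ)
    (X Y : Fin g → FG g)
    (hX : ∀ i, X i ∈ (⊤ : Subgroup (FG g)).lowerCentralSeries 1)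
    (hY : ∀ i, Y i ∈ (⊤ : Subgroup (FG g)).lowerCentralSeries 1)
    (f : FG g →* FG g)
    (hfx : ∀ i, f (xF g i) = xF g i * X i)
    (hfy : ∀ i, f (yF g i) = yF g i * Y i)
    (hbd : (f (bdryF g))⁻¹ * bdryF g ∈ (⊤ : Subgroup (FG g)).lowerCentralSeries 3) :
    (List.ofFn fun i : Fin g => ⁅X i, yF g i⁆ * ⁅xF g i, Y i⁆).prod
      ∈ (⊤ : Subgroup (FG g)).lowerCentralSeries 3 := by
  set N := (⊤ : Subgroup (FG g)).lowerCentralSeries 3 with hN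
  let φ : FG g →* FG g ⧸ N := QuotientGroup.mk' N
  have hmem : ∀ w : FG g, φ w = 1 ↔ w ∈ N := fun w => QuotientGroup.eq_one_iff w
  have hsurj : Function.Surjective φ := QuotientGroup.mk'_surjective N
  -- images of `π₃` are central in `π/π₄`
  have hcen : ∀ a : FG g, a ∈ (⊤ : Subgroup (FG g)).lowerCentralSeries 2 → ∀ q, Commute (φ a) q := by
    intro a ha q
    obtain ⟨b, rfl⟩ := hsurj q
    have hN3 : ⁅a, b⁆ ∈ N := Subgroup.commutator_mem_commutator ha (Subgroup.mem_top b)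
    have h1 : φ ⁅a, b⁆ = 1 := (hmem _).mpr hN3
    rw [map_commutatorElement] at h1
    exact commutatorElement_eq_one_iff_commute.mp h1
  have hc₁ : ∀ i, ∀ z, Commute (φ ⁅X i, yF g i⁆) z := fun i =>
    hcen _ (Subgroup.commutator_mem_commutator (hX i) (Subgroup.mem_top _))
  have hc₂ : ∀ i, ∀ z, Commute (φ ⁅xF g i, Y i⁆) z := by
    intro i
    refine hcen _ ?_
    have h2 := Subgroup.commutator_mem_commutator (hY i) (Subgroup.mem_top (xF g i))
    rw [← commutatorElement_inv]
    exact inv_mem h2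
  have hab : ∀ i, Commute (φ (X i)) (φ (Y i)) := by
    intro i
    have h3 : ⁅X i, Y i⁆ ∈ N :=
      aux_comm_comm_le (FG g) (Subgroup.commutator_mem_commutator (hX i) (hY i))
    have h4 : φ ⁅X i, Y i⁆ = 1 := (hmem _).mpr h3
    rw [map_commutatorElement] at h4
    exact commutatorElement_eq_one_iff_commute.mp h4
  have hexp : ∀ i, ⁅φ (xF g i) * φ (X i), φ (yF g i) * φ (Y i)⁆
      = ⁅φ (xF g i), φ (yF g i)⁆ * (φ ⁅X i, yF g i⁆ * φ ⁅xF g i, Y i⁆) := by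
    intro i
    apply aux_expand
    · rw [map_commutatorElement]; group
    · exact hab i
    · rw [map_commutatorElement]; group
    · exact hc₁ i
    · exact hc₂ i
  have hfb : φ (f (bdryF g))
      = (List.ofFn fun i => ⁅φ (xF g i) * φ (X i), φ (yF g i) * φ (Y i)⁆).prod := by
    show φ (f ((List.ofFn fun i : Fin g => ⁅xF g i, yF g i⁆).prod)) = _
    rw [map_list_prod, List.map_ofFn, map_list_prod, List.map_ofFn,
      show (⇑φ ∘ ⇑f ∘ fun i : Fin g => ⁅xF g i, yF g i⁆)
          = fun i => ⁅φ (xF g i) * φ (X i), φ (yF g i) * φ (Y i)⁆ from funext fun i => by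
        simp only [Function.comp_apply, map_commutatorElement, hfx, hfy, map_mul]]
  have hb2 : φ (bdryF g) = (List.ofFn fun i => ⁅φ (xF g i), φ (yF g i)⁆).prod := by
    show φ ((List.ofFn fun i : Fin g => ⁅xF g i, yF g i⁆).prod) = _
    rw [map_list_prod, List.map_ofFn,
      show (⇑φ ∘ fun i : Fin g => ⁅xF g i, yF g i⁆)
          = fun i => ⁅φ (xF g i), φ (yF g i)⁆ from funext fun i => by
        simp only [Function.comp_apply, map_commutatorElement]]
  have heq : φ (f (bdryF g)) = φ (bdryF g) := by
    have h := (hmem _).mpr hbd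
    rw [map_mul, map_inv] at h
    exact inv_mul_eq_one.mp h
  have hprod : (List.ofFn fun i => ⁅φ (xF g i) * φ (X i), φ (yF g i) * φ (Y i)⁆).prod
      = (List.ofFn fun i => ⁅φ (xF g i), φ (yF g i)⁆).prod
        * (List.ofFn fun i => φ ⁅X i, yF g i⁆ * φ ⁅xF g i, Y i⁆).prod := by
    have h5 := aux_prod_central (fun i => ⁅φ (xF g i), φ (yF g i)⁆)
      (fun i => φ ⁅X i, yF g i⁆ * φ ⁅xF g i, Y i⁆)
      (fun i z => (hc₁ i z).mul_left (hc₂ i z))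
    rw [← h5]
    exact congrArg List.prod (congrArg List.ofFn (funext fun i => hexp i))
  have hC : (List.ofFn fun i => φ ⁅X i, yF g i⁆ * φ ⁅xF g i, Y i⁆).prod = 1 := by
    have h6 := heq
    rw [hfb, hb2, hprod] at h6
    exact mul_eq_left.mp h6
  rw [← hmem, map_list_prod, List.map_ofFn]
  rw [show (φ ∘ fun i : Fin g => ⁅X i, yF g i⁆ * ⁅xF g i, Y i⁆)
      = fun i => φ ⁅X i, yF g i⁆ * φ ⁅xF g i, Y i⁆ from funext fun i => by
        simp [Function.comp, map_mul]]
  exact hC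
end
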